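/- arXiv:1903.12065 — 5 statements merged into one kernel-verified Lean document; each statement's English description precedes it below -/
import Mathlib

section
/- Let w_1,…,w_n be i.i.d. random variables uniformly distributed on [0,1] (so almost surely pairwise distinct), let 1 ≤ s ≤ n, and let U denote the s-th smallest value among w_1,…,w_n. Then for every real number r ≥ 2, E[⌈log_r(1/U)⌉] ≤ log(n/s)/log r + 3. -/
open MeasureTheory ProbabilityTheory
open scoped ENNReal

lemma aux_sorted_getD_le_iff : ∀ (l : List ℝ), l.Pairwise (· ≤ ·) → ∀ (k : ℕ), k < l.length →
    ∀ (t : ℝ), (l.getD k 0 ≤ t ↔ k + 1 ≤ l.countP (fun x => decide (x ≤ t))) := by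
  intro l
  induction l with
  | nil => intro _ k hk; simp at hk
  | cons a l ih =>
    intro hl k hk t
    rw [List.pairwise_cons] at hl
    obtain ⟨ha, hl⟩ := hl
    rcases k with _ | k
    · rw [List.getD_cons_zero, List.countP_cons]
      constructor
      · intro h
        have hpa : (fun x => decide (x ≤ t)) a = true := by simpa using h
        rw [if_pos hpa]
        omega
      · intro h
        by_contra hat
        have h0 : l.countP (fun x => decide (x ≤ t)) = 0 := by
          rw [List.countP_eq_zero]
          intro x hx
          simp only [decide_eq_true_eq]
          intro hxt
          exact hat (le_trans (ha x hx) hxt)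
        have hpa : ¬ ((fun x => decide (x ≤ t)) a = true) := by simpa using hat
        rw [h0, if_neg hpa] at h
        omega
    · have hk' : k < l.length := by simpa using Nat.lt_of_succ_lt_succ hk
      by_cases hat : a ≤ t
      · rw [List.getD_cons_succ, List.countP_cons, ih hl k hk' t]
        have hpa : (fun x => decide (x ≤ t)) a = true := by simpa using hat
        rw [if_pos hpa]
        omega
      · have h0 : l.countP (fun x => decide (x ≤ t)) = 0 := by
          rw [List.countP_eq_zero]
          intro x hx
          simp only [decide_eq_true_eq]
          intro hxt
          exact hat (le_trans (ha x hx) hxt)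
        have hpa : ¬ ((fun x => decide (x ≤ t)) a = true) := by simpa using hat
        have hcount : (a :: l).countP (fun x => decide (x ≤ t)) = 0 := by
          rw [List.countP_cons, h0, if_neg hpa]
        have hmem : l.getD k 0 ∈ l := by
          rw [List.getD_eq_getElem l 0 hk']
          exact List.getElem_mem hk'
        have hnle : ¬ (a :: l).getD (k+1) 0 ≤ t := by
          rw [List.getD_cons_succ]
          exact fun h => hat (le_trans (ha _ hmem) h)
        rw [hcount]
        exact iff_of_false hnle (by omega)

lemma aux_pow_self_le_factorial_mul_exp : ∀ s : ℕ, 1 ≤ s →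
    (s : ℝ) ^ s ≤ (Nat.factorial s : ℝ) * Real.exp ((s : ℝ) - 1) := by
  intro s hs
  induction s, hs using Nat.le_induction with
  | base => simp
  | succ s hs ih =>
    have hs0 : (0:ℝ) < s := by exact_mod_cast hs
    have key : ((s:ℝ) + 1) ^ s ≤ (s:ℝ) ^ s * Real.exp 1 := by
      have h1 : (s:ℝ) + 1 ≤ s * Real.exp (1 / s) := by
        have e := Real.add_one_le_exp (1 / (s:ℝ))
        have h2 : (s:ℝ) * (1/s + 1) ≤ s * Real.exp (1/s) := by nlinarith
        have h3 : (s:ℝ) * (1/s + 1) = s + 1 := by field_simp; ring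
        linarith
      calc ((s:ℝ) + 1) ^ s ≤ ((s:ℝ) * Real.exp (1/s)) ^ s :=
            pow_le_pow_left₀ (by positivity) h1 s
      _ = (s:ℝ) ^ s * Real.exp (1/s) ^ s := by rw [mul_pow]
      _ = (s:ℝ) ^ s * Real.exp 1 := by
            rw [← Real.exp_nat_mul]
            congr 1
            field_simp
    push_cast [Nat.factorial_succ]
    calc ((s:ℝ)+1)^(s+1) = ((s:ℝ)+1) * ((s:ℝ)+1)^s := by ring
    _ ≤ ((s:ℝ)+1) * ((s:ℝ)^s * Real.exp 1) :=
        mul_le_mul_of_nonneg_left key (by positivity)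
    _ ≤ ((s:ℝ)+1) * (((Nat.factorial s : ℝ) * Real.exp ((s:ℝ)-1)) * Real.exp 1) :=
        mul_le_mul_of_nonneg_left
          (mul_le_mul_of_nonneg_right ih (Real.exp_pos 1).le) (by positivity)
    _ = ((s:ℝ)+1) * (Nat.factorial s : ℝ) * Real.exp ((s:ℝ)+1-1) := by
        rw [show ((s:ℝ)+1-1) = ((s:ℝ)-1) + 1 by ring, Real.exp_add]; ring

/-- Let `w_1, …, w_n` be i.i.d. uniform on `[0,1]`, `1 ≤ s ≤ n`, and let `U` be the `s`-th
smallest among the `w_i` (the `s`-th order statistic, obtained as entry `s-1` of the values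
sorted in nondecreasing order). Then for every real `r ≥ 2`,
`E[⌈log_r (1/U)⌉] ≤ log(n/s)/log r + 3`, where `log` denotes the base-2 logarithm. -/
theorem expected_ceil_log_inv_order_statistic
    {Ω : Type*} [MeasurableSpace Ω] {μ : Measure Ω} [IsProbabilityMeasure μ]
    (n s : ℕ) (hs : 1 ≤ s) (hsn : s ≤ n)
    (w : Fin n → Ω → ℝ)
    (hmeas : ∀ i, Measurable (w i))
    (hindep : iIndepFun w μ)
    (hunif : ∀ i, μ.map (w i) = volume.restrict (Set.Icc (0 : ℝ) 1))
    (U : Ω → ℝ)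
    (hU : ∀ ω, U ω = ((Finset.univ.val.map fun i : Fin n => w i ω).sort (· ≤ ·)).getD (s - 1) 0)
    (r : ℝ) (hr : 2 ≤ r) :
    ∫ ω, (⌈Real.logb r (1 / U ω)⌉ : ℝ) ∂μ
      ≤ Real.logb 2 ((n : ℝ) / s) / Real.logb 2 r + 3 := by
  classical
  -- pointwise characterization
  have hUle : ∀ (ω : Ω) (t : ℝ), U ω ≤ t ↔
      s ≤ (Finset.univ.filter (fun i => w i ω ≤ t)).card := by
    intro ω t
    have hlen : ((Finset.univ.val.map fun i : Fin n => w i ω).sort (· ≤ ·)).length = n := by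
      rw [Multiset.length_sort, Multiset.card_map]
      simp
    have hks : s - 1 < n := by omega
    rw [hU ω, aux_sorted_getD_le_iff _ (Multiset.pairwise_sort _ _) (s-1) (by rw [hlen]; exact hks) t]
    have hcount : (((Finset.univ.val.map fun i : Fin n => w i ω).sort (· ≤ ·)).countP
        (fun x => decide (x ≤ t))) = (Finset.univ.filter (fun i => w i ω ≤ t)).card := by
      have h1 : Multiset.countP (fun x => x ≤ t) (Finset.univ.val.map fun i : Fin n => w i ω)
          = (((Finset.univ.val.map fun i : Fin n => w i ω).sort (· ≤ ·)).countP
            (fun x => decide (x ≤ t))) := by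
        conv_lhs => rw [← Multiset.sort_eq (Finset.univ.val.map fun i : Fin n => w i ω) (· ≤ ·)]
        rfl
      rw [← h1, Multiset.countP_map]
      rfl
    rw [hcount]
    have hss : s - 1 + 1 = s := by omega
    rw [hss]
  -- event form
  have hUset : ∀ t : ℝ, {ω | U ω ≤ t} =
      ⋃ S ∈ Finset.powersetCard s (Finset.univ : Finset (Fin n)), ⋂ i ∈ S, {ω | w i ω ≤ t} := by
    intro t
    ext ω
    simp only [Set.mem_setOf_eq, Set.mem_iUnion, Set.mem_iInter, Finset.mem_powersetCard]
    rw [hUle ω t]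
    constructor
    · intro h
      obtain ⟨S, hS, hcard⟩ := Finset.exists_subset_card_eq h
      exact ⟨S, ⟨hS.trans (Finset.filter_subset _ _), hcard⟩,
        fun i hi => (Finset.mem_filter.mp (hS hi)).2⟩
    · rintro ⟨S, ⟨hSuniv, hScard⟩, hSle⟩
      have hsub : S ⊆ Finset.univ.filter (fun i => w i ω ≤ t) :=
        fun i hi => Finset.mem_filter.mpr ⟨Finset.mem_univ i, hSle i hi⟩
      calc s = S.card := hScard.symm
      _ ≤ _ := Finset.card_le_card hsub
  have hUmeas : Measurable U := by
    apply measurable_of_Iic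
    intro t
    have h1 : U ⁻¹' Set.Iic t = {ω | U ω ≤ t} := rfl
    rw [h1, hUset t]
    apply Set.Finite.measurableSet_biUnion (Finset.finite_toSet _)
    intro S _
    exact Finset.measurableSet_biInter _ (fun i _ => hmeas i measurableSet_Iic)
  -- law of w i
  have hwle : ∀ (i : Fin n) (t : ℝ), 0 ≤ t → t ≤ 1 →
      μ {ω | w i ω ≤ t} = ENNReal.ofReal t := by
    intro i t h0 h1
    have h2 : {ω | w i ω ≤ t} = w i ⁻¹' Set.Iic t := rfl
    rw [h2, ← Measure.map_apply (hmeas i) measurableSet_Iic, hunif i,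
      Measure.restrict_apply measurableSet_Iic]
    have h3 : Set.Iic t ∩ Set.Icc 0 1 = Set.Icc 0 t := by
      ext x
      simp only [Set.mem_inter_iff, Set.mem_Iic, Set.mem_Icc]
      constructor
      · rintro ⟨hx, hx0, _⟩; exact ⟨hx0, hx⟩
      · rintro ⟨hx0, hx⟩; exact ⟨hx, hx0, hx.trans h1⟩
    rw [h3, Real.volume_Icc]
    norm_num
  -- tail bound
  have htail : ∀ t : ℝ, 0 ≤ t → t ≤ 1 →
      μ {ω | U ω ≤ t} ≤ (n.choose s : ℝ≥0∞) * ENNReal.ofReal t ^ s := by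
    intro t h0 h1
    rw [hUset t]
    refine le_trans (measure_biUnion_finset_le _ _) ?_
    have hbound : ∀ S ∈ Finset.powersetCard s (Finset.univ : Finset (Fin n)),
        μ (⋂ i ∈ S, {ω | w i ω ≤ t}) = ENNReal.ofReal t ^ s := by
      intro S hS
      rw [Finset.mem_powersetCard] at hS
      have hpre : (⋂ i ∈ S, {ω | w i ω ≤ t}) = ⋂ i ∈ S, w i ⁻¹' Set.Iic t := rfl
      rw [hpre, hindep.meas_biInter (fun i _ => ⟨Set.Iic t, measurableSet_Iic, rfl⟩)]
      have hprod : ∀ i ∈ S, μ (w i ⁻¹' Set.Iic t) = ENNReal.ofReal t := fun i _ => hwle i t h0 h1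
      rw [Finset.prod_congr rfl hprod, Finset.prod_const, hS.2]
    rw [Finset.sum_congr rfl hbound, Finset.sum_const, Finset.card_powersetCard,
      Finset.card_univ, Fintype.card_fin]
    simp [nsmul_eq_mul]
  -- a.e. bounds on U
  have hae : ∀ᵐ ω ∂μ, 0 < U ω ∧ U ω ≤ 1 := by
    have h1 : ∀ i : Fin n, ∀ᵐ ω ∂μ, 0 < w i ω ∧ w i ω ≤ 1 := by
      intro i
      rw [ae_iff]
      have hset : {ω | ¬(0 < w i ω ∧ w i ω ≤ 1)} = w i ⁻¹' (Set.Ioc 0 1)ᶜ := by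
        ext ω
        simp [Set.mem_Ioc]
      rw [hset, ← Measure.map_apply (hmeas i) measurableSet_Ioc.compl, hunif i,
        Measure.restrict_apply measurableSet_Ioc.compl]
      have h2 : (Set.Ioc (0:ℝ) 1)ᶜ ∩ Set.Icc 0 1 = {0} := by
        ext x
        simp only [Set.mem_inter_iff, Set.mem_compl_iff, Set.mem_Ioc, Set.mem_Icc,
          Set.mem_singleton_iff, not_and, not_le]
        constructor
        · rintro ⟨hn, h0, h1⟩
          rcases lt_or_eq_of_le h0 with h | h
          · exact absurd (hn h) (not_lt.mpr h1)
          · exact h.symm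
        · rintro rfl
          exact ⟨fun h => absurd h (lt_irrefl 0), le_refl 0, zero_le_one⟩
      rw [h2]
      exact measure_singleton 0
    have hall : ∀ᵐ ω ∂μ, ∀ i, 0 < w i ω ∧ w i ω ≤ 1 := ae_all_iff.mpr h1
    filter_upwards [hall] with ω hω
    constructor
    · by_contra h
      push_neg at h
      have h2 := (hUle ω 0).mp h
      have hpos : 0 < (Finset.univ.filter (fun i => w i ω ≤ 0)).card := lt_of_lt_of_le hs h2
      obtain ⟨i, hi⟩ := Finset.card_pos.mp hpos
      exact absurd (Finset.mem_filter.mp hi).2 (not_le.mpr (hω i).1)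
    · rw [hUle ω 1]
      have hfil : Finset.univ.filter (fun i => w i ω ≤ 1) = Finset.univ :=
        Finset.filter_true_of_mem (fun i _ => (hω i).2)
      rw [hfil, Finset.card_univ, Fintype.card_fin]
      exact hsn
  -- Y = -log U
  set Y : Ω → ℝ := fun ω => -Real.log (U ω) with hYdef
  have hYmeas : Measurable Y := (Real.measurable_log.comp hUmeas).neg
  have hYnn : 0 ≤ᵐ[μ] Y := by
    filter_upwards [hae] with ω hω
    simp only [hYdef, Pi.zero_apply, neg_nonneg]
    exact Real.log_nonpos (le_of_lt hω.1) hω.2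
  have hlayer : ∫⁻ ω, ENNReal.ofReal (Y ω) ∂μ = ∫⁻ t in Set.Ioi 0, μ {ω | t < Y ω} :=
    lintegral_eq_lintegral_meas_lt μ hYnn hYmeas.aemeasurable
  -- constants
  set Cr : ℝ := (n.choose s : ℝ) with hCrdef
  have hCr1 : (1:ℝ) ≤ Cr := by
    have := Nat.choose_pos hsn
    rw [hCrdef]
    exact_mod_cast this
  have hCr0 : (0:ℝ) < Cr := lt_of_lt_of_le zero_lt_one hCr1
  set t₀ : ℝ := Real.log Cr / s with ht₀def
  have hs0 : (0:ℝ) < s := by exact_mod_cast hs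
  have ht₀ : 0 ≤ t₀ := div_nonneg (Real.log_nonneg hCr1) hs0.le
  -- tail via exp
  have htail2 : ∀ t : ℝ, 0 < t →
      μ {ω | t < Y ω} ≤ ENNReal.ofReal (Cr * Real.exp (-(s:ℝ) * t)) := by
    intro t ht
    have hmono : μ {ω | t < Y ω} ≤ μ {ω | U ω ≤ Real.exp (-t)} := by
      apply measure_mono_ae
      filter_upwards [hae] with ω hω h
      have h' : t < -Real.log (U ω) := h
      have h1 : Real.log (U ω) < -t := by linarith
      exact le_of_lt ((Real.log_lt_iff_lt_exp hω.1).mp h1)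
    refine le_trans hmono (le_trans (htail _ (Real.exp_nonneg _) ?_) ?_)
    · exact Real.exp_le_one_iff.mpr (by linarith)
    · have hcast : (n.choose s : ℝ≥0∞) = ENNReal.ofReal Cr := by
        rw [hCrdef]; simp
      have hexp : Real.exp (-t) ^ s = Real.exp (-(s:ℝ) * t) := by
        rw [← Real.exp_nat_mul]; congr 1; ring
      rw [hcast, ← ENNReal.ofReal_pow (Real.exp_nonneg _), hexp,
        ← ENNReal.ofReal_mul hCr0.le]
  -- split the lintegral
  have hsplit : ∫⁻ t in Set.Ioi (0:ℝ), μ {ω | t < Y ω}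
      ≤ ENNReal.ofReal t₀ + ENNReal.ofReal (1/s) := by
    rw [← Set.Ioc_union_Ioi_eq_Ioi ht₀,
      lintegral_union measurableSet_Ioi (Set.Ioc_disjoint_Ioi le_rfl)]
    have hpiece1 : ∫⁻ t in Set.Ioc (0:ℝ) t₀, μ {ω | t < Y ω} ≤ ENNReal.ofReal t₀ := by
      refine le_trans (lintegral_mono fun t => prob_le_one) ?_
      rw [setLIntegral_one, Real.volume_Ioc]
      simp
    have hIexp : ∫ t in Set.Ioi t₀, Real.exp (-(s:ℝ) * t) = Real.exp (-(s:ℝ) * t₀) / s := by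
      have hderiv : ∀ t ∈ Set.Ici t₀, HasDerivAt (fun x => -Real.exp (-(s:ℝ) * x) / s)
          (Real.exp (-(s:ℝ) * t)) t := by
        intro t _
        have h1 : HasDerivAt (fun x : ℝ => -(s:ℝ) * x) (-(s:ℝ)) t := by
          simpa using (hasDerivAt_id t).const_mul (-(s:ℝ))
        have h2 : HasDerivAt (fun x : ℝ => Real.exp (-(s:ℝ) * x))
            (Real.exp (-(s:ℝ) * t) * (-(s:ℝ))) t := h1.exp
        have h3 := (h2.neg).div_const (s:ℝ)
        have h4 : -(Real.exp (-(s:ℝ) * t) * -(s:ℝ)) / s = Real.exp (-(s:ℝ) * t) := by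
          rw [div_eq_iff hs0.ne']; ring
        rw [h4] at h3
        exact h3
      have htends : Filter.Tendsto (fun x => -Real.exp (-(s:ℝ) * x) / s)
          Filter.atTop (nhds 0) := by
        have h1 : Filter.Tendsto (fun x : ℝ => Real.exp (-(s:ℝ) * x)) Filter.atTop (nhds 0) :=
          Real.tendsto_exp_atBot.comp
            (Filter.tendsto_id.const_mul_atTop_of_neg (neg_neg_iff_pos.2 hs0))
        have h2 := (h1.neg).div_const (s:ℝ)
        simpa using h2
      have hkey := MeasureTheory.integral_Ioi_of_hasDerivAt_of_tendsto' hderiv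
        (exp_neg_integrableOn_Ioi t₀ hs0) htends
      rw [hkey]
      ring
    have hexpint : IntegrableOn (fun t => Cr * Real.exp (-(s:ℝ) * t)) (Set.Ioi t₀) :=
      (exp_neg_integrableOn_Ioi t₀ hs0).const_mul Cr
    have hpiece2 : ∫⁻ t in Set.Ioi t₀, μ {ω | t < Y ω} ≤ ENNReal.ofReal (1/s) := by
      have hb : ∀ t ∈ Set.Ioi t₀, μ {ω | t < Y ω}
          ≤ ENNReal.ofReal (Cr * Real.exp (-(s:ℝ) * t)) := by
        intro t ht
        exact htail2 t (lt_of_le_of_lt ht₀ ht)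
      refine le_trans (setLIntegral_mono (by fun_prop) hb) ?_
      rw [← ofReal_integral_eq_lintegral_ofReal hexpint
        (Filter.Eventually.of_forall fun t => by positivity)]
      rw [MeasureTheory.integral_const_mul, hIexp]
      apply ENNReal.ofReal_le_ofReal
      have hst₀ : (s:ℝ) * t₀ = Real.log Cr := by
        rw [ht₀def, mul_comm, div_mul_cancel₀ _ hs0.ne']
      rw [show -(s:ℝ) * t₀ = -((s:ℝ) * t₀) by ring, hst₀, Real.exp_neg, Real.exp_log hCr0]
      apply le_of_eq
      field_simp
    exact add_le_add hpiece1 hpiece2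
  have hYlint : ∫⁻ ω, ENNReal.ofReal (Y ω) ∂μ ≤ ENNReal.ofReal (t₀ + 1/s) := by
    rw [hlayer]
    refine le_trans hsplit ?_
    rw [← ENNReal.ofReal_add ht₀ (by positivity)]
  have hYint : Integrable Y μ := by
    refine ⟨hYmeas.aestronglyMeasurable, ?_⟩
    have hcongr : ∫⁻ ω, ‖Y ω‖ₑ ∂μ = ∫⁻ ω, ENNReal.ofReal (Y ω) ∂μ := by
      apply lintegral_congr_ae
      filter_upwards [hYnn] with ω h
      rw [← ofReal_norm, Real.norm_of_nonneg h]
    show (∫⁻ ω, ‖Y ω‖ₑ ∂μ) < ⊤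
    rw [hcongr]
    exact lt_of_le_of_lt hYlint ENNReal.ofReal_lt_top
  have hYle : ∫ ω, Y ω ∂μ ≤ t₀ + 1/s := by
    have h1 : ENNReal.ofReal (∫ ω, Y ω ∂μ) ≤ ENNReal.ofReal (t₀ + 1/s) := by
      rw [ofReal_integral_eq_lintegral_ofReal hYint hYnn]
      exact hYlint
    exact (ENNReal.ofReal_le_ofReal_iff (by positivity)).mp h1
  -- final assembly
  have hr1 : (1:ℝ) < r := lt_of_lt_of_le one_lt_two hr
  have hlogr : 0 < Real.log r := Real.log_pos hr1
  have hlog2 : 0 < Real.log 2 := Real.log_pos one_lt_two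
  have hfg : ∀ ω, (⌈Real.logb r (1 / U ω)⌉ : ℝ) ≤ Y ω / Real.log r + 1 := by
    intro ω
    have heq : Real.logb r (1 / U ω) = Y ω / Real.log r := by
      rw [Real.logb, one_div, Real.log_inv, hYdef]
    rw [← heq]
    exact le_of_lt (Int.ceil_lt_add_one _)
  have hgint : Integrable (fun ω => Y ω / Real.log r + 1) μ :=
    (hYint.div_const _).add (integrable_const 1)
  have hfnn : 0 ≤ᵐ[μ] fun ω => (⌈Real.logb r (1 / U ω)⌉ : ℝ) := by
    filter_upwards [hae] with ω hω
    have h1 : 1 ≤ 1 / U ω := one_le_one_div hω.1 hω.2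
    have h2 : (0:ℤ) ≤ ⌈Real.logb r (1 / U ω)⌉ := Int.ceil_nonneg (Real.logb_nonneg hr1 h1)
    show (0:ℝ) ≤ ((⌈Real.logb r (1 / U ω)⌉ : ℤ) : ℝ)
    exact_mod_cast h2
  have hCrbound : Real.log Cr ≤ s * Real.log ((n:ℝ)/s) + ((s:ℝ) - 1) := by
    have hfact : (s:ℝ)^s ≤ (Nat.factorial s : ℝ) * Real.exp ((s:ℝ)-1) :=
      aux_pow_self_le_factorial_mul_exp s hs
    have hdesc : Cr * (Nat.factorial s : ℝ) ≤ (n:ℝ)^s := by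
      have h1 : n.choose s * Nat.factorial s ≤ n ^ s := by
        calc n.choose s * Nat.factorial s = Nat.factorial s * n.choose s := by ring
        _ = n.descFactorial s := (Nat.descFactorial_eq_factorial_mul_choose n s).symm
        _ ≤ n ^ s := Nat.descFactorial_le_pow n s
      rw [hCrdef]
      exact_mod_cast h1
    have hup : Cr ≤ ((n:ℝ)/s)^s * Real.exp ((s:ℝ)-1) := by
      have hss : (0:ℝ) < (s:ℝ)^s := by positivity
      rw [div_pow, div_mul_eq_mul_div, le_div_iff₀ hss]
      calc Cr * (s:ℝ)^s ≤ Cr * ((Nat.factorial s : ℝ) * Real.exp ((s:ℝ)-1)) :=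
            mul_le_mul_of_nonneg_left hfact hCr0.le
      _ = (Cr * (Nat.factorial s : ℝ)) * Real.exp ((s:ℝ)-1) := by ring
      _ ≤ (n:ℝ)^s * Real.exp ((s:ℝ)-1) :=
            mul_le_mul_of_nonneg_right hdesc (Real.exp_nonneg _)
    calc Real.log Cr ≤ Real.log (((n:ℝ)/s)^s * Real.exp ((s:ℝ)-1)) :=
          Real.log_le_log hCr0 hup
    _ = s * Real.log ((n:ℝ)/s) + ((s:ℝ)-1) := by
          have hn0 : (0:ℝ) < (n:ℝ) := by exact_mod_cast lt_of_lt_of_le hs hsn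
          rw [Real.log_mul (pow_pos (div_pos hn0 hs0) s).ne' (Real.exp_ne_zero _),
            Real.log_pow, Real.log_exp]
  have hKval : t₀ + 1/s ≤ Real.log ((n:ℝ)/s) + 1 := by
    rw [ht₀def, ← add_div, div_le_iff₀ hs0]
    nlinarith [hCrbound]
  have hlogb : Real.logb 2 ((n:ℝ)/s) / Real.logb 2 r = Real.log ((n:ℝ)/s) / Real.log r := by
    rw [Real.logb, Real.logb, div_div_div_cancel_right₀]
    exact hlog2.ne'
  calc ∫ ω, (⌈Real.logb r (1 / U ω)⌉ : ℝ) ∂μ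
      ≤ ∫ ω, (Y ω / Real.log r + 1) ∂μ :=
        integral_mono_of_nonneg hfnn hgint (Filter.Eventually.of_forall hfg)
  _ = (∫ ω, Y ω ∂μ) / Real.log r + 1 := by
        rw [integral_add (hYint.div_const _) (integrable_const 1), integral_div, integral_const]
        simp
  _ ≤ (t₀ + 1/s) / Real.log r + 1 := by gcongr
  _ ≤ (Real.log ((n:ℝ)/s) + 1) / Real.log r + 1 := by gcongr
  _ ≤ Real.log ((n:ℝ)/s) / Real.log r + 3 := by
        rw [add_div]
        have h1r : 1 / Real.log r ≤ 2 := by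
          rw [div_le_iff₀ hlogr]
          have hl2 : (0.6931471803 : ℝ) < Real.log 2 := Real.log_two_gt_d9
          have hl2r : Real.log 2 ≤ Real.log r := Real.log_le_log (by norm_num) hr
          linarith
        linarith
  _ = Real.logb 2 ((n:ℝ)/s) / Real.logb 2 r + 3 := by rw [hlogb]
end

section
/- Let 0 < α ≤ 1 be a real number, let r > 1 be a real number, and let s be a positive integer. Let (w_j)_{j≥1} be i.i.d. random variables uniformly distributed on [0,1], and define Y_j = 0 if w_j ≥ α, Y_j = 1 if α/r ≤ w_j < α, and Y_j = 2 if w_j < α/r. Let τ = inf{t ≥ 1 : |{j ≤ t : Y_j = 2}| = s}. Then E[∑_{j=1}^{τ} Y_j] = (r+1)·s. -/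
open MeasureTheory ProbabilityTheory

private lemma count_mono (P : ℕ → Prop) [DecidablePred P] :
    Monotone (fun t => ((Finset.range t).filter P).card) :=
  fun _ _ hab => Finset.card_le_card (Finset.filter_subset_filter _ (Finset.range_subset_range.mpr hab))

private lemma count_succ (P : ℕ → Prop) [DecidablePred P] (t : ℕ) :
    ((Finset.range (t+1)).filter P).card
      = ((Finset.range t).filter P).card + (if P t then 1 else 0) := by
  rw [Finset.range_add_one, Finset.filter_insert]
  split_ifs with h
  · rw [Finset.card_insert_of_notMem (by simp)]
  · simp

private lemma count_ivt (P : ℕ → Prop) [DecidablePred P] (s t : ℕ)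
    (h : s ≤ ((Finset.range t).filter P).card) :
    ∃ u ≤ t, ((Finset.range u).filter P).card = s := by
  induction t with
  | zero => exact ⟨0, le_rfl, by simp at h ⊢; omega⟩
  | succ t ih =>
    by_cases h' : s ≤ ((Finset.range t).filter P).card
    · obtain ⟨u, hu, hc⟩ := ih h'
      exact ⟨u, hu.trans (Nat.le_succ t), hc⟩
    · push_neg at h'
      refine ⟨t+1, le_rfl, ?_⟩
      have hle := count_succ P t
      split_ifs at hle <;> omega

private lemma count_unbounded (P : ℕ → Prop) [DecidablePred P]
    (hP : ∀ m, ∃ n, m ≤ n ∧ P n) (k : ℕ) :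
    ∃ t, k ≤ ((Finset.range t).filter P).card := by
  induction k with
  | zero => exact ⟨0, Nat.zero_le _⟩
  | succ k ih =>
    obtain ⟨t, ht⟩ := ih
    obtain ⟨n, hn, hPn⟩ := hP t
    refine ⟨n+1, ?_⟩
    have h1 : ((Finset.range t).filter P).card ≤ ((Finset.range n).filter P).card :=
      count_mono P hn
    have h2 := count_succ P n
    rw [if_pos hPn] at h2
    omega

/-- Let `0 < α ≤ 1`, `r > 1`, `s ≥ 1`, and let `(w_j)_{j ≥ 1}` (here 0-indexed) be i.i.d.
uniform on `[0,1]`. Define `Y_j = 2` if `w_j < α/r`, `Y_j = 1` if `α/r ≤ w_j < α`, and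
`Y_j = 0` if `w_j ≥ α`. Let `τ` be the first time `t` at which `s` of the values
`Y_1, …, Y_t` equal `2`. Then `E[∑_{j=1}^{τ} Y_j] = (r+1)·s`. -/
theorem expected_epoch_message_weight
    {Ω : Type*} [MeasurableSpace Ω] {μ : Measure Ω} [IsProbabilityMeasure μ]
    (α r : ℝ) (hα0 : 0 < α) (hα1 : α ≤ 1) (hr : 1 < r)
    (s : ℕ) (hs : 1 ≤ s)
    (w : ℕ → Ω → ℝ)
    (hmeas : ∀ j, Measurable (w j))
    (hindep : iIndepFun w μ)
    (hunif : ∀ j, μ.map (w j) = volume.restrict (Set.Icc (0 : ℝ) 1))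
    (Y : ℕ → Ω → ℝ)
    (hY : ∀ j ω, Y j ω =
      if w j ω < α / r then 2 else if w j ω < α then 1 else 0)
    (τ : Ω → ℕ)
    (hτ : ∀ ω, τ ω = sInf {t : ℕ | ((Finset.range t).filter (fun j => Y j ω = 2)).card = s}) :
    ∫ ω, (∑ j ∈ Finset.range (τ ω), Y j ω) ∂μ = (r + 1) * s := by
  classical
  have hr0 : (0:ℝ) < r := lt_trans one_pos hr
  set p : ℝ := α / r with hp
  have hp0 : 0 < p := div_pos hα0 hr0
  have hpα : p < α := by
    rw [hp, div_lt_iff₀ hr0]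
    nlinarith
  have hp1 : p ≤ 1 := (lt_of_lt_of_le hpα hα1).le
  set A : ℕ → Set Ω := fun j => w j ⁻¹' Set.Iio p with hA
  set B : ℕ → Set Ω := fun j => w j ⁻¹' Set.Iio α with hB
  have hAm : ∀ j, MeasurableSet (A j) := fun j => (hmeas j) measurableSet_Iio
  have hBm : ∀ j, MeasurableSet (B j) := fun j => (hmeas j) measurableSet_Iio
  have hY2 : ∀ j ω, (Y j ω = 2 ↔ ω ∈ A j) := by
    intro j ω
    rw [hY]
    by_cases h1 : w j ω < p
    · simp [hA, h1, Set.mem_preimage, Set.mem_Iio]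
    · by_cases h2 : w j ω < α <;>
        simp [hA, h1, h2, Set.mem_preimage, Set.mem_Iio] <;> norm_num
  have hYnn : ∀ j ω, 0 ≤ Y j ω := by
    intro j ω
    rw [hY]
    split_ifs <;> norm_num
  -- counting function and its measurability
  have hNcard : ∀ t ω, ((Finset.range t).filter (fun j => Y j ω = 2)).card
      = ∑ i ∈ Finset.range t, if ω ∈ A i then 1 else 0 := by
    intro t ω
    rw [Finset.card_filter]
    exact Finset.sum_congr rfl fun i _ => by simp [hY2 i ω]
  have hNm : ∀ t, Measurable
      (fun ω => ((Finset.range t).filter (fun j => Y j ω = 2)).card) := by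
    intro t
    have : (fun ω => ((Finset.range t).filter (fun j => Y j ω = 2)).card)
        = fun ω => ∑ i ∈ Finset.range t, if ω ∈ A i then 1 else 0 := funext (hNcard t)
    rw [this]
    exact Finset.measurable_sum _ fun i _ =>
      Measurable.ite (hAm i) measurable_const measurable_const
  set C : ℕ → Set Ω :=
    fun j => {ω | ((Finset.range j).filter (fun i => Y i ω = 2)).card < s} with hC
  have hCm : ∀ j, MeasurableSet (C j) := fun j =>
    measurableSet_lt (hNm j) measurable_const
  -- uniform measure computation
  have hμIio : ∀ (j : ℕ) (c : ℝ), 0 ≤ c → c ≤ 1 →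
      μ (w j ⁻¹' Set.Iio c) = ENNReal.ofReal c := by
    intro j c hc0 hc1
    rw [← Measure.map_apply (hmeas j) measurableSet_Iio, hunif j,
      Measure.restrict_apply measurableSet_Iio]
    have : Set.Iio c ∩ Set.Icc (0:ℝ) 1 = Set.Ico 0 c := by
      ext x
      simp only [Set.mem_inter_iff, Set.mem_Iio, Set.mem_Icc, Set.mem_Ico]
      constructor
      · rintro ⟨h1, h2, _⟩; exact ⟨h2, h1⟩
      · rintro ⟨h1, h2⟩; exact ⟨h2, h1, le_trans h2.le hc1⟩
    rw [this, Real.volume_Ico]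
    simp
  -- independence: the event up to time j is independent of w j
  have hABkey : ∀ (j : ℕ) (c : ℝ),
      μ (w j ⁻¹' Set.Iio c ∩ C j) = μ (w j ⁻¹' Set.Iio c) * μ (C j) := by
    intro j c
    have hdisj : Disjoint ({j} : Finset ℕ) (Finset.range j) := by
      simp [Finset.disjoint_singleton_left]
    have hIF := hindep.indepFun_finset {j} (Finset.range j) hdisj hmeas
    let g1 : Ω → (↥({j} : Finset ℕ) → ℝ) := fun a i => w i a
    let g2 : Ω → (↥(Finset.range j) → ℝ) := fun a i => w i a
    let E1 : Set (↥({j} : Finset ℕ) → ℝ) :=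
      (fun v => v ⟨j, Finset.mem_singleton_self j⟩) ⁻¹' Set.Iio c
    let E2 : Set (↥(Finset.range j) → ℝ) :=
      {v | (∑ i, if v i < p then 1 else 0) < s}
    have hE1 : MeasurableSet E1 := (measurable_pi_apply _) measurableSet_Iio
    have hE2 : MeasurableSet E2 := by
      refine measurableSet_lt ?_ measurable_const
      exact Finset.measurable_sum _ fun i _ =>
        Measurable.ite ((measurable_pi_apply i) measurableSet_Iio)
          measurable_const measurable_const
    have h := hIF.measure_inter_preimage_eq_mul E1 E2 hE1 hE2
    have e1 : g1 ⁻¹' E1 = w j ⁻¹' Set.Iio c := rfl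
    have e2 : g2 ⁻¹' E2 = C j := by
      ext ω
      simp only [g2, E2, Set.mem_preimage, Set.mem_setOf_eq, hC]
      rw [hNcard j ω,
        ← Finset.sum_coe_sort (Finset.range j) (fun i => if ω ∈ A i then 1 else 0)]
      constructor
      · intro h'
        refine lt_of_le_of_lt (le_of_eq ?_) h'
        exact Finset.sum_congr rfl fun i _ => by simp [hA, Set.mem_preimage, Set.mem_Iio]
      · intro h'
        refine lt_of_le_of_lt (le_of_eq ?_) h'
        exact Finset.sum_congr rfl fun i _ => by simp [hA, Set.mem_preimage, Set.mem_Iio]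
    rwa [e1, e2] at h
  have hACmul : ∀ j, μ (A j ∩ C j) = ENNReal.ofReal p * μ (C j) := by
    intro j
    rw [hA]
    rw [hABkey j p, hμIio j p hp0.le hp1]
  have hBCmul : ∀ j, μ (B j ∩ C j) = ENNReal.ofReal α * μ (C j) := by
    intro j
    rw [hB]
    rw [hABkey j α, hμIio j α hα0.le hα1]
  -- Borel–Cantelli: a.s. infinitely many A j occur
  have hiset : iIndepSet A μ := by
    rw [iIndepSet_iff_meas_biInter hAm]
    intro S
    exact hindep.meas_biInter fun i _ => ⟨Set.Iio p, measurableSet_Iio, rfl⟩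
  have hBC2 : μ (Filter.limsup A Filter.atTop) = 1 := by
    refine measure_limsup_eq_one hAm hiset ?_
    have hconst : ∀ n : ℕ, μ (A n) = ENNReal.ofReal p := fun n =>
      hμIio n p hp0.le hp1
    calc (∑' n, μ (A n)) = ∑' _ : ℕ, ENNReal.ofReal p := tsum_congr hconst
    _ = (⊤ : ENNReal) := ENNReal.tsum_const_eq_top_of_ne_zero (by simp [hp0])
  have hGm : MeasurableSet (Filter.limsup A Filter.atTop) :=
    MeasurableSet.measurableSet_limsup hAm
  have hGae : ∀ᵐ ω ∂μ, ω ∈ Filter.limsup A Filter.atTop := by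
    have h1 : μ (Filter.limsup A Filter.atTop)ᶜ = 0 := by
      rw [measure_compl hGm (measure_ne_top _ _), hBC2, measure_univ]
      simp
    exact mem_ae_iff.mpr h1
  -- the summand functions
  set F : ℕ → Ω → ENNReal := fun j ω =>
    (A j ∩ C j).indicator (fun _ => (1:ENNReal)) ω
      + (B j ∩ C j).indicator (fun _ => (1:ENNReal)) ω with hF
  have hFm : ∀ j, Measurable (F j) := fun j =>
    ((measurable_const.indicator ((hAm j).inter (hCm j))).add
      (measurable_const.indicator ((hBm j).inter (hCm j))))
  -- pointwise facts on the good set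
  have hpt : ∀ ω, ω ∈ Filter.limsup A Filter.atTop →
      (ENNReal.ofReal (∑ j ∈ Finset.range (τ ω), Y j ω) = ∑' j, F j ω) ∧
      ((s : ENNReal) = ∑' j, (A j ∩ C j).indicator (fun _ => (1:ENNReal)) ω) := by
    intro ω hω
    have hfreq : ∀ m, ∃ n, m ≤ n ∧ Y n ω = 2 := by
      intro m
      have h1 : ∃ᶠ n in Filter.atTop, ω ∈ A n :=
        Filter.mem_limsup_iff_frequently_mem.mp hω
      obtain ⟨n, hn, hAn⟩ := Filter.frequently_atTop.mp h1 m
      exact ⟨n, hn, (hY2 n ω).mpr hAn⟩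
    have hne : {t : ℕ | ((Finset.range t).filter (fun j => Y j ω = 2)).card = s}.Nonempty := by
      obtain ⟨t, ht⟩ := count_unbounded _ hfreq s
      obtain ⟨u, _, hu⟩ := count_ivt _ s t ht
      exact ⟨u, hu⟩
    have hτs : ((Finset.range (τ ω)).filter (fun j => Y j ω = 2)).card = s := by
      rw [hτ ω]; exact Nat.sInf_mem hne
    have hiff : ∀ j, j < τ ω ↔
        ((Finset.range j).filter (fun j' => Y j' ω = 2)).card < s := by
      intro j
      constructor
      · intro hj
        by_contra hcon
        push_neg at hcon
        obtain ⟨u, hu, hus⟩ := count_ivt _ s j hcon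
        have hle : τ ω ≤ u := by rw [hτ ω]; exact Nat.sInf_le hus
        omega
      · intro h
        by_contra hj
        push_neg at hj
        have hmono := count_mono (fun j' => Y j' ω = 2) hj
        simp only at hmono
        omega
    have hmemC : ∀ j, j < τ ω → ω ∈ C j := by
      intro j hj
      simp only [hC, Set.mem_setOf_eq]
      exact (hiff j).mp hj
    have hnotC : ∀ j, τ ω ≤ j → ω ∉ C j := by
      intro j hj
      simp only [hC, Set.mem_setOf_eq, not_lt]
      have hmono := count_mono (fun j' => Y j' ω = 2) hj
      simp only at hmono
      omega
    have hzeroF : ∀ j, j ∉ Finset.range (τ ω) → F j ω = 0 := by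
      intro j hj
      rw [Finset.mem_range, not_lt] at hj
      have hnc := hnotC j hj
      simp only [hF]
      rw [Set.indicator_of_notMem (fun hmem => hnc (Set.mem_of_mem_inter_right hmem)),
        Set.indicator_of_notMem (fun hmem => hnc (Set.mem_of_mem_inter_right hmem)), add_zero]
    have hzeroI : ∀ j, j ∉ Finset.range (τ ω) →
        (A j ∩ C j).indicator (fun _ => (1:ENNReal)) ω = 0 := by
      intro j hj
      rw [Finset.mem_range, not_lt] at hj
      exact Set.indicator_of_notMem (fun hmem => hnotC j hj (Set.mem_of_mem_inter_right hmem)) _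
    constructor
    · calc ENNReal.ofReal (∑ j ∈ Finset.range (τ ω), Y j ω)
          = ∑ j ∈ Finset.range (τ ω), ENNReal.ofReal (Y j ω) :=
            ENNReal.ofReal_sum_of_nonneg fun j _ => hYnn j ω
      _ = ∑ j ∈ Finset.range (τ ω), F j ω := by
          refine Finset.sum_congr rfl fun j hj => ?_
          have hjlt : j < τ ω := Finset.mem_range.mp hj
          have hCj : ω ∈ C j := hmemC j hjlt
          rw [hY]
          simp only [hF]
          by_cases h1 : w j ω < p
          · have hAj : ω ∈ A j := by simp [hA, Set.mem_preimage, Set.mem_Iio, h1]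
            have hBj : ω ∈ B j := by
              simp [hB, Set.mem_preimage, Set.mem_Iio]
              exact lt_trans h1 hpα
            rw [if_pos h1, Set.indicator_of_mem (Set.mem_inter hAj hCj),
              Set.indicator_of_mem (Set.mem_inter hBj hCj)]
            norm_num
          · have hAj : ω ∉ A j := by simp [hA, Set.mem_preimage, Set.mem_Iio, h1]
            rw [if_neg h1, Set.indicator_of_notMem (fun hmem => hAj (Set.mem_of_mem_inter_left hmem))]
            by_cases h2 : w j ω < α
            · have hBj : ω ∈ B j := by simp [hB, Set.mem_preimage, Set.mem_Iio, h2]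
              rw [if_pos h2, Set.indicator_of_mem (Set.mem_inter hBj hCj)]
              norm_num
            · have hBj : ω ∉ B j := by simp [hB, Set.mem_preimage, Set.mem_Iio, h2]
              rw [if_neg h2, Set.indicator_of_notMem (fun hmem => hBj (Set.mem_of_mem_inter_left hmem))]
              norm_num
      _ = ∑' j, F j ω := (tsum_eq_sum hzeroF).symm
    · calc (s : ENNReal)
          = (((Finset.range (τ ω)).filter (fun j => Y j ω = 2)).card : ENNReal) := by
            rw [hτs]
      _ = ∑ j ∈ Finset.range (τ ω), if Y j ω = 2 then (1:ENNReal) else 0 := by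
          rw [Finset.card_filter, Nat.cast_sum]
          exact Finset.sum_congr rfl fun j _ => by split_ifs <;> simp
      _ = ∑ j ∈ Finset.range (τ ω),
            (A j ∩ C j).indicator (fun _ => (1:ENNReal)) ω := by
          refine Finset.sum_congr rfl fun j hj => ?_
          have hCj : ω ∈ C j := hmemC j (Finset.mem_range.mp hj)
          by_cases h : Y j ω = 2
          · rw [if_pos h, Set.indicator_of_mem (Set.mem_inter ((hY2 j ω).mp h) hCj)]
          · rw [if_neg h,
              Set.indicator_of_notMem (fun hmem => h ((hY2 j ω).mpr (Set.mem_of_mem_inter_left hmem)))]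
      _ = ∑' j, (A j ∩ C j).indicator (fun _ => (1:ENNReal)) ω :=
          (tsum_eq_sum hzeroI).symm
  -- the key identity: ofReal p * T = s
  set T : ENNReal := ∑' j, μ (C j) with hT
  have hsT : ENNReal.ofReal p * T = (s : ENNReal) := by
    have h1 : ∫⁻ ω, ∑' j, (A j ∩ C j).indicator (fun _ => (1:ENNReal)) ω ∂μ
        = ∑' j, μ (A j ∩ C j) := by
      rw [lintegral_tsum fun j =>
        (measurable_const.indicator ((hAm j).inter (hCm j))).aemeasurable]
      exact tsum_congr fun j => by
        rw [lintegral_indicator_const ((hAm j).inter (hCm j)), one_mul]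
    have h2 : ∫⁻ ω, ∑' j, (A j ∩ C j).indicator (fun _ => (1:ENNReal)) ω ∂μ
        = ∫⁻ _, (s : ENNReal) ∂μ :=
      (lintegral_congr_ae (hGae.mono fun ω hω => ((hpt ω hω).2).symm))
    calc ENNReal.ofReal p * T = ∑' j, ENNReal.ofReal p * μ (C j) :=
          ENNReal.tsum_mul_left.symm
    _ = ∑' j, μ (A j ∩ C j) := tsum_congr fun j => (hACmul j).symm
    _ = ∫⁻ _, (s : ENNReal) ∂μ := h1 ▸ h2
    _ = (s : ENNReal) := by simp
  -- the main lintegral computation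
  have hL : ∫⁻ ω, ENNReal.ofReal (∑ j ∈ Finset.range (τ ω), Y j ω) ∂μ
      = (s : ENNReal) + ENNReal.ofReal r * s := by
    have hαrp : α = r * p := by
      rw [hp]; field_simp
    calc ∫⁻ ω, ENNReal.ofReal (∑ j ∈ Finset.range (τ ω), Y j ω) ∂μ
        = ∫⁻ ω, ∑' j, F j ω ∂μ :=
          lintegral_congr_ae (hGae.mono fun ω hω => (hpt ω hω).1)
    _ = ∑' j, ∫⁻ ω, F j ω ∂μ := lintegral_tsum fun j => (hFm j).aemeasurable
    _ = ∑' j, (ENNReal.ofReal p + ENNReal.ofReal α) * μ (C j) := by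
        refine tsum_congr fun j => ?_
        simp only [hF]
        rw [lintegral_add_left (measurable_const.indicator ((hAm j).inter (hCm j))),
          lintegral_indicator_const ((hAm j).inter (hCm j)),
          lintegral_indicator_const ((hBm j).inter (hCm j)), one_mul, one_mul,
          hACmul j, hBCmul j, add_mul]
    _ = (ENNReal.ofReal p + ENNReal.ofReal α) * T := ENNReal.tsum_mul_left
    _ = ENNReal.ofReal p * T + ENNReal.ofReal α * T := add_mul _ _ _
    _ = (s : ENNReal) + ENNReal.ofReal r * s := by
        rw [hsT, hαrp, ENNReal.ofReal_mul hr0.le, mul_assoc, hsT]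
  -- convert to a Bochner integral
  have hnn : 0 ≤ᵐ[μ] fun ω => ∑ j ∈ Finset.range (τ ω), Y j ω :=
    Filter.Eventually.of_forall fun ω => Finset.sum_nonneg fun j _ => hYnn j ω
  have hg : Measurable (fun ω => (∑' j, F j ω).toReal) :=
    (Measurable.ennreal_tsum hFm).ennreal_toReal
  have haem : AEMeasurable (fun ω => ∑ j ∈ Finset.range (τ ω), Y j ω) μ := by
    refine hg.aemeasurable.congr ?_
    refine hGae.mono fun ω hω => ?_
    show (∑' j, F j ω).toReal = ∑ j ∈ Finset.range (τ ω), Y j ω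
    rw [← (hpt ω hω).1,
      ENNReal.toReal_ofReal (Finset.sum_nonneg fun j _ => hYnn j ω)]
  rw [integral_eq_lintegral_of_nonneg_ae hnn haem.aestronglyMeasurable, hL]
  rw [ENNReal.toReal_add (ENNReal.natCast_ne_top s)
    (ENNReal.mul_ne_top ENNReal.ofReal_ne_top (ENNReal.natCast_ne_top s)),
    ENNReal.toReal_mul, ENNReal.toReal_ofReal hr0.le, ENNReal.toReal_natCast]
  ring
end

section
/- Let s ≤ a < b be positive integers, and for each integer j with a < j ≤ b let X_j be independent Bernoulli random variables with Pr[X_j = 1] = s/j. Let Y = ∑_{j=a+1}^{b} X_j. Then Pr[Y < s·(H_b − H_a)/2] ≤ exp(−s·(H_b − H_a)/8) ≤ ((a+1)/(b+1))^{s/8}. -/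
open MeasureTheory ProbabilityTheory

noncomputable def harmonicNumber (m : ℕ) : ℝ := ∑ i ∈ Finset.Icc 1 m, (1 : ℝ) / i

lemma harm_diff {a b : ℕ} (hab : a ≤ b) :
    harmonicNumber b - harmonicNumber a = ∑ j ∈ Finset.Ioc a b, (1:ℝ)/j := by
  have h1 : ∀ m : ℕ, harmonicNumber m = ∑ i ∈ Finset.Ioc 0 m, (1:ℝ)/i := by
    intro m; rw [harmonicNumber, ← Finset.Icc_add_one_left_eq_Ioc]; rfl
  rw [h1, h1]
  have hdisj : Disjoint (Finset.Ioc 0 a) (Finset.Ioc a b) := by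
    rw [Finset.disjoint_left]
    intro x hx hx'
    simp only [Finset.mem_Ioc] at hx hx'
    omega
  have hunion : Finset.Ioc 0 a ∪ Finset.Ioc a b = Finset.Ioc 0 b :=
    Finset.Ioc_union_Ioc_eq_Ioc (Nat.zero_le a) hab
  rw [← hunion, Finset.sum_union hdisj]; ring

lemma log_le_sum {a : ℕ} : ∀ b : ℕ, a ≤ b →
    Real.log ((b:ℝ)+1) - Real.log ((a:ℝ)+1) ≤ ∑ j ∈ Finset.Ioc a b, (1:ℝ)/j := by
  intro b hab
  induction b, hab using Nat.le_induction with
  | base => simp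
  | succ b hab ih =>
    rw [← Finset.Icc_add_one_left_eq_Ioc, Finset.sum_Icc_succ_top (by omega), Finset.Icc_add_one_left_eq_Ioc]
    have hb1 : (0:ℝ) < (b:ℝ)+1 := by positivity
    have key : Real.log ((b:ℝ)+1+1) - Real.log ((b:ℝ)+1) ≤ 1/((b:ℝ)+1) := by
      have h := Real.log_le_sub_one_of_pos (x := ((b:ℝ)+1+1)/((b:ℝ)+1)) (by positivity)
      rw [Real.log_div (by positivity) (by positivity)] at h
      have heq : ((b:ℝ)+1+1)/((b:ℝ)+1) - 1 = 1/((b:ℝ)+1) := by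
        field_simp
        ring
      linarith
    push_cast
    linarith

lemma exp_half_le : Real.exp (-(1/2):ℝ) ≤ 5/8 := by
  have hE : Real.exp 1 = Real.exp (1/2) * Real.exp (1/2) := by
    rw [← Real.exp_add]; norm_num
  have h1 : (8/5:ℝ) ≤ Real.exp (1/2) := by
    nlinarith [Real.exp_pos (1/2:ℝ), Real.exp_one_gt_d9]
  rw [Real.exp_neg]
  have h2 : (0:ℝ) < Real.exp (1/2) := Real.exp_pos _
  rw [inv_le_comm₀ h2 (by norm_num)]
  linarith

/-- Let `s ≤ a < b` be positive integers and for `a < j ≤ b` let `X_j` be independent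
Bernoulli random variables with `Pr[X_j = 1] = s/j`. Let `Y = ∑_{j=a+1}^b X_j`. Then
`Pr[Y < s·(H_b − H_a)/2] ≤ exp(−s·(H_b − H_a)/8) ≤ ((a+1)/(b+1))^{s/8}`. -/
theorem epoch_changes_tail_bound
    {Ω : Type*} [MeasurableSpace Ω] {μ : Measure Ω} [IsProbabilityMeasure μ]
    (s a b : ℕ) (hs : 1 ≤ s) (hsa : s ≤ a) (hab : a < b)
    (X : ℕ → Ω → ℝ)
    (hmeas : ∀ j, Measurable (X j))
    (hvals : ∀ j ∈ Finset.Ioc a b, ∀ ω, X j ω = 0 ∨ X j ω = 1)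
    (hbern : ∀ j ∈ Finset.Ioc a b, μ {ω | X j ω = 1} = ENNReal.ofReal ((s : ℝ) / j))
    (hindep : iIndepFun
      (fun j : {j : ℕ // j ∈ Finset.Ioc a b} => X j.val) μ) :
    μ {ω | (∑ j ∈ Finset.Ioc a b, X j ω) < s * (harmonicNumber b - harmonicNumber a) / 2}
      ≤ ENNReal.ofReal (Real.exp (-(s * (harmonicNumber b - harmonicNumber a)) / 8)) ∧
    Real.exp (-(s * (harmonicNumber b - harmonicNumber a)) / 8)
      ≤ (((a : ℝ) + 1) / ((b : ℝ) + 1)) ^ ((s : ℝ) / 8) := by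
  classical
  have hab' : a ≤ b := hab.le
  set m : ℝ := (s:ℝ) * (harmonicNumber b - harmonicNumber a) with hm
  have hsum : harmonicNumber b - harmonicNumber a = ∑ j ∈ Finset.Ioc a b, (1:ℝ)/j :=
    harm_diff hab'
  have hHnn : 0 ≤ harmonicNumber b - harmonicNumber a := by
    rw [hsum]; positivity
  have hmnn : 0 ≤ m := mul_nonneg (Nat.cast_nonneg s) hHnn
  set t : ℝ := -(1/2) with ht
  have ht0 : t ≤ 0 := by norm_num [ht]
  set Y : Ω → ℝ := fun ω => ∑ j ∈ Finset.Ioc a b, X j ω with hY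
  have hYmeas : Measurable Y := Finset.measurable_sum _ (fun j _ => hmeas j)
  have hYnn : ∀ ω, 0 ≤ Y ω := by
    intro ω
    apply Finset.sum_nonneg
    intro j hj
    rcases hvals j hj ω with h | h <;> simp [h]
  have hint : Integrable (fun ω => Real.exp (t * Y ω)) μ := by
    refine Integrable.mono' (integrable_const 1)
      ((hYmeas.const_mul t).exp.aestronglyMeasurable) ?_
    filter_upwards with ω
    rw [Real.norm_eq_abs, abs_of_pos (Real.exp_pos _)]
    calc Real.exp (t * Y ω) ≤ Real.exp 0 := by
          apply Real.exp_le_exp.2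
          exact mul_nonpos_of_nonpos_of_nonneg ht0 (hYnn ω)
      _ = 1 := Real.exp_zero
  -- Chernoff
  have hcher := measure_le_le_exp_mul_mgf (μ := μ) (X := Y) (m/2) ht0 hint
  -- mgf of sum
  have hYeq : Y = ∑ i : {j : ℕ // j ∈ Finset.Ioc a b}, (fun j : {j : ℕ // j ∈ Finset.Ioc a b} => X j.val) i := by
    funext ω
    rw [Finset.sum_apply]
    exact (Finset.sum_coe_sort (Finset.Ioc a b) (fun j => X j ω)).symm
  have hmgfY : mgf Y μ t = ∏ i : {j : ℕ // j ∈ Finset.Ioc a b}, mgf (X i.val) μ t := by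
    rw [hYeq]
    exact hindep.mgf_sum (fun i => hmeas i.val) Finset.univ
  -- individual mgf
  have hmgf : ∀ j ∈ Finset.Ioc a b, mgf (X j) μ t = 1 + (Real.exp t - 1) * ((s:ℝ)/j) := by
    intro j hj
    have hjpos : 0 < j := by
      simp only [Finset.mem_Ioc] at hj; omega
    have hA : MeasurableSet {ω | X j ω = 1} := (hmeas j) (measurableSet_singleton 1)
    have hXind : X j = Set.indicator {ω | X j ω = 1} (fun _ => (1:ℝ)) := by
      funext ω
      by_cases h : X j ω = 1
      · simp [Set.indicator, h]
      · rcases hvals j hj ω with h0 | h1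
        · simp [Set.indicator, h, h0]
        · exact absurd h1 h
    have hXint : Integrable (X j) μ := by
      rw [hXind]; exact (integrable_const (1:ℝ)).indicator hA
    have hXavg : ∫ ω, X j ω ∂μ = (s:ℝ)/j := by
      conv_lhs => rw [hXind]
      rw [integral_indicator_const _ hA, Measure.real, hbern j hj,
        ENNReal.toReal_ofReal (div_nonneg (Nat.cast_nonneg s) (Nat.cast_nonneg j))]
      simp
    have hexpeq : ∀ ω, Real.exp (t * X j ω) = 1 + (Real.exp t - 1) * X j ω := by
      intro ω
      rcases hvals j hj ω with h | h <;> simp [h]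
    simp only [mgf]
    simp_rw [hexpeq]
    rw [integral_add (integrable_const 1) (hXint.const_mul _), integral_const,
      integral_const_mul, hXavg]
    simp
  -- product bound
  have hple : ∀ j ∈ Finset.Ioc a b, (s:ℝ)/j ≤ 1 := by
    intro j hj
    simp only [Finset.mem_Ioc] at hj
    have hj0 : (0:ℝ) < j := by exact_mod_cast (by omega : 0 < j)
    rw [div_le_one hj0]
    exact_mod_cast le_trans hsa (le_of_lt hj.1)
  have hprodle : ∏ i : {j : ℕ // j ∈ Finset.Ioc a b}, mgf (X i.val) μ t
      ≤ Real.exp ((Real.exp t - 1) * (harmonicNumber b - harmonicNumber a) * s) := by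
    rw [Finset.prod_coe_sort (Finset.Ioc a b) (fun j => mgf (X j) μ t)]
    have hrhs : Real.exp ((Real.exp t - 1) * (harmonicNumber b - harmonicNumber a) * s)
        = ∏ j ∈ Finset.Ioc a b, Real.exp ((Real.exp t - 1) * ((s:ℝ)/j)) := by
      rw [← Real.exp_sum, hsum]
      congr 1
      rw [Finset.mul_sum, Finset.sum_mul]
      refine Finset.sum_congr rfl (fun j hj => by ring)
    rw [hrhs]
    refine Finset.prod_le_prod ?_ ?_
    · intro j hj
      rw [hmgf j hj]
      have h1 : Real.exp t ≤ 1 := Real.exp_le_one_iff.2 ht0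
      have h2 : (0:ℝ) ≤ (s:ℝ)/j := div_nonneg (Nat.cast_nonneg s) (Nat.cast_nonneg j)
      nlinarith [hple j hj, Real.exp_pos t, mul_nonneg (sub_nonneg.2 (hple j hj)) (sub_nonneg.2 h1)]
    · intro j hj
      rw [hmgf j hj]
      have := Real.add_one_le_exp ((Real.exp t - 1) * ((s:ℝ)/j))
      linarith
  -- combine the real bound
  have hfinal : Real.exp (-t * (m / 2)) * mgf Y μ t ≤ Real.exp (-m / 8) := by
    rw [hmgfY]
    calc Real.exp (-t * (m / 2)) * ∏ i : {j : ℕ // j ∈ Finset.Ioc a b}, mgf (X i.val) μ t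
        ≤ Real.exp (-t * (m / 2)) * Real.exp ((Real.exp t - 1) * (harmonicNumber b - harmonicNumber a) * s) := by
          apply mul_le_mul_of_nonneg_left hprodle (le_of_lt (Real.exp_pos _))
      _ = Real.exp (-t * (m / 2) + (Real.exp t - 1) * (harmonicNumber b - harmonicNumber a) * s) := by
          rw [← Real.exp_add]
      _ ≤ Real.exp (-m / 8) := by
          apply Real.exp_le_exp.2
          have hE : Real.exp t ≤ 5/8 := exp_half_le
          have haux : (Real.exp t - 1) * (harmonicNumber b - harmonicNumber a) * s
              = (Real.exp t - 1) * m := by rw [hm]; ring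
          rw [haux, ht]
          nlinarith [hmnn, hE]
  constructor
  · have hsub : {ω | Y ω < m/2} ⊆ {ω | Y ω ≤ m/2} := by
      intro ω h
      simp only [Set.mem_setOf_eq] at h ⊢
      exact le_of_lt h
    have hgoal : μ {ω | (∑ j ∈ Finset.Ioc a b, X j ω) < (s:ℝ) * (harmonicNumber b - harmonicNumber a) / 2}
        = μ {ω | Y ω < m/2} := rfl
    rw [hgoal]
    refine le_trans (measure_mono hsub) ?_
    rw [← ENNReal.ofReal_toReal (measure_ne_top μ {ω | Y ω ≤ m/2})]
    exact ENNReal.ofReal_le_ofReal (hcher.trans hfinal)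
  · have hlog := log_le_sum (a := a) b hab'
    have hpa : (0:ℝ) < (a:ℝ)+1 := by positivity
    have hpb : (0:ℝ) < (b:ℝ)+1 := by positivity
    have hfrac : (0:ℝ) < ((a:ℝ)+1)/((b:ℝ)+1) := by positivity
    rw [Real.rpow_def_of_pos hfrac]
    apply Real.exp_le_exp.2
    rw [Real.log_div (ne_of_gt hpa) (ne_of_gt hpb)]
    have hmge : (s:ℝ) * (Real.log ((b:ℝ)+1) - Real.log ((a:ℝ)+1)) ≤ m := by
      rw [hm, hsum]
      apply mul_le_mul_of_nonneg_left _ (Nat.cast_nonneg s)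
      linarith
    rw [hm] at hmge ⊢
    nlinarith [hmge]
end

section
/- Let w_1,…,w_n be i.i.d. random variables uniformly distributed on [0,1] (so almost surely pairwise distinct), and let 1 ≤ s < n. For each integer i with s < i ≤ n, let C_i be the event that w_i is among the s smallest values of w_1,…,w_i. Then the events C_{s+1}, C_{s+2}, …, C_n are mutually independent, and Pr[C_i] = s/i for every i. -/
open Finset MeasureTheory ProbabilityTheory
open scoped ENNReal


open Finset

namespace Reservoir

variable {n : ℕ}

def L (τ : Equiv.Perm (Fin n)) (i : Fin n) : ℕ :=
  (univ.filter (fun j => j < i ∧ τ j < τ i)).card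

lemma L_lt (τ : Equiv.Perm (Fin n)) (i : Fin n) : L τ i < i + 1 := by
  have h : (univ.filter (fun j => j < i ∧ τ j < τ i)) ⊆ Finset.Iio i := by
    intro j hj
    simp only [mem_filter] at hj
    exact Finset.mem_Iio.2 hj.2.1
  have := Finset.card_le_card h
  rw [Fin.card_Iio] at this
  simp only [L]; omega

def lehmer (τ : Equiv.Perm (Fin n)) : ∀ i : Fin n, Fin (i + 1) :=
  fun i => ⟨L τ i, L_lt τ i⟩

/-- L τ i equals the number of elements of V (values at indices ≤ i) below τ i. -/
lemma L_eq_card_V (τ : Equiv.Perm (Fin n)) (i : Fin n) :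
    L τ i = ((univ.filter (fun v => τ.symm v ≤ i)).filter (fun v => v < τ i)).card := by
  rw [L]
  apply Finset.card_bij (fun j _ => τ j)
  · intro j hj
    simp only [mem_filter, mem_univ, true_and] at hj ⊢
    exact ⟨by rw [Equiv.symm_apply_apply]; exact le_of_lt hj.1, hj.2⟩
  · intro a ha b hb hab
    exact τ.injective hab
  · intro v hv
    simp only [mem_filter, mem_univ, true_and] at hv
    obtain ⟨hv1, hv2⟩ := hv
    refine ⟨τ.symm v, ?_, by simp⟩
    simp only [mem_filter, mem_univ, true_and, Equiv.apply_symm_apply]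
    refine ⟨lt_of_le_of_ne hv1 ?_, hv2⟩
    intro hEq
    have hvi : τ i = v := by rw [← hEq, Equiv.apply_symm_apply]
    rw [← hvi] at hv2
    exact absurd hv2 (lt_irrefl _)

lemma step (τ τ' : Equiv.Perm (Fin n)) (hL : ∀ k, L τ k = L τ' k) (i : Fin n)
    (hub : ∀ k, i < k → τ k = τ' k) : τ i = τ' i := by
  have hsymm : ∀ v, τ.symm v ≤ i ↔ τ'.symm v ≤ i := by
    intro v
    constructor
    · intro hv
      by_contra hv'
      push_neg at hv'
      have : τ (τ'.symm v) = τ' (τ'.symm v) := hub _ hv'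
      rw [Equiv.apply_symm_apply] at this
      have h3 : τ.symm v = τ'.symm v := (Equiv.symm_apply_eq τ).2 this.symm
      rw [h3] at hv
      exact absurd hv (not_le.2 hv')
    · intro hv
      by_contra hv'
      push_neg at hv'
      have : τ (τ.symm v) = τ' (τ.symm v) := hub _ hv'
      rw [Equiv.apply_symm_apply] at this
      have h3 : τ'.symm v = τ.symm v := (Equiv.symm_apply_eq τ').2 this
      rw [h3] at hv
      exact absurd hv (not_le.2 hv')
  set V := univ.filter (fun v => τ.symm v ≤ i) with hV
  have hV' : univ.filter (fun v : Fin n => τ'.symm v ≤ i) = V := by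
    apply Finset.filter_congr
    intro v _
    simp [hsymm v]
  have h1 : L τ i = (V.filter (fun v => v < τ i)).card := L_eq_card_V τ i
  have h2 : L τ' i = (V.filter (fun v => v < τ' i)).card := by
    rw [L_eq_card_V τ' i, hV']
  have hmemτ : τ i ∈ V := by simp [hV]
  have hmemτ' : τ' i ∈ V := by
    rw [← hV']
    simp
  have hcard : (V.filter (fun v => v < τ i)).card = (V.filter (fun v => v < τ' i)).card := by
    rw [← h1, ← h2, hL i]
  by_contra hne
  rcases lt_or_gt_of_ne (fun h => hne h) with hlt | hgt
  · have hss : V.filter (fun v => v < τ i) ⊂ V.filter (fun v => v < τ' i) := by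
      refine Finset.ssubset_iff_of_subset (Finset.monotone_filter_right V ?_) |>.2 ?_
      · intro v _ hv; exact lt_trans hv hlt
      · exact ⟨τ i, by simp [hmemτ, hlt], by simp⟩
    exact absurd hcard (Nat.ne_of_lt (Finset.card_lt_card hss))
  · have hss : V.filter (fun v => v < τ' i) ⊂ V.filter (fun v => v < τ i) := by
      refine Finset.ssubset_iff_of_subset (Finset.monotone_filter_right V ?_) |>.2 ?_
      · intro v _ hv; exact lt_trans hv hgt
      · exact ⟨τ' i, by simp [hmemτ', hgt], by simp⟩
    exact absurd hcard.symm (Nat.ne_of_lt (Finset.card_lt_card hss))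

lemma lehmer_injective : Function.Injective (lehmer (n := n)) := by
  intro τ τ' h
  have hL : ∀ i, L τ i = L τ' i := fun i => congrArg Fin.val (congrFun h i)
  have key : ∀ d : ℕ, ∀ i : Fin n, n - 1 - (i : ℕ) ≤ d → τ i = τ' i := by
    intro d
    induction d with
    | zero =>
      intro i hi
      refine step τ τ' hL i (fun k hk => ?_)
      exfalso
      have h1 : (i : ℕ) < (k : ℕ) := hk
      have h2 : (k : ℕ) < n := k.isLt
      omega
    | succ d ih =>
      intro i hi
      refine step τ τ' hL i (fun k hk => ?_)
      refine ih k ?_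
      have h1 : (i : ℕ) < (k : ℕ) := hk
      have h2 : (k : ℕ) < n := k.isLt
      omega
  ext i
  exact congrArg Fin.val (key n i (by omega))


lemma lehmer_bijective : Function.Bijective (lehmer (n := n)) := by
  rw [Fintype.bijective_iff_injective_and_card]
  refine ⟨lehmer_injective, ?_⟩
  rw [Fintype.card_perm, Fintype.card_pi, Fintype.card_fin]
  simp only [Fintype.card_fin]
  rw [Fin.prod_univ_eq_prod_range (fun i => i + 1) n,
    Finset.prod_range_add_one_eq_factorial]

lemma card_filter_val_lt (m s : ℕ) (h : s ≤ m) :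
    (univ.filter (fun a : Fin m => (a : ℕ) < s)).card = s := by
  have key : (univ.filter (fun a : Fin m => (a : ℕ) < s)).card = (Finset.range s).card := by
    refine Finset.card_bij' (fun (a : Fin m) _ => (a : ℕ))
      (fun a ha => (⟨a, lt_of_lt_of_le (Finset.mem_range.1 ha) h⟩ : Fin m)) ?_ ?_ ?_ ?_
    · intro a ha
      simp only [mem_filter, mem_univ, true_and] at ha
      exact Finset.mem_range.2 ha
    · intro a ha
      simp only [mem_filter, mem_univ, true_and]
      exact Finset.mem_range.1 ha
    · intro a ha; rfl
    · intro a ha; rfl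
  rw [key, Finset.card_range]

lemma card_goodPerms (s : ℕ) (F : Finset (Fin n)) (hF : ∀ i ∈ F, s ≤ (i : ℕ)) :
    (univ.filter (fun τ : Equiv.Perm (Fin n) => ∀ i ∈ F, L τ i < s)).card
      = ∏ i : Fin n, (if i ∈ F then s else (i : ℕ) + 1) := by
  classical
  have hmain : (univ.filter (fun τ : Equiv.Perm (Fin n) => ∀ i ∈ F, L τ i < s)).card
      = (Fintype.piFinset (fun i : Fin n =>
          univ.filter (fun a : Fin ((i : ℕ) + 1) => i ∈ F → (a : ℕ) < s))).card := by
    apply Finset.card_bij (fun τ _ => lehmer τ)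
    · intro τ hτ
      simp only [mem_filter, mem_univ, true_and] at hτ
      rw [Fintype.mem_piFinset]
      intro i
      simp only [mem_filter, mem_univ, true_and]
      intro hiF
      exact hτ i hiF
    · intro a _ b _ hab
      exact lehmer_injective hab
    · intro v hv
      obtain ⟨τ, hτ⟩ := lehmer_bijective.2 v
      refine ⟨τ, ?_, hτ⟩
      simp only [mem_filter, mem_univ, true_and]
      intro i hiF
      rw [Fintype.mem_piFinset] at hv
      have := hv i
      simp only [mem_filter, mem_univ, true_and] at this
      have h2 := this hiF
      rw [← hτ] at h2
      exact h2
  rw [hmain, Fintype.card_piFinset]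
  apply Finset.prod_congr rfl
  intro i _
  by_cases hiF : i ∈ F
  · have heq : (univ.filter (fun a : Fin ((i : ℕ) + 1) => i ∈ F → (a : ℕ) < s))
        = univ.filter (fun a : Fin ((i : ℕ) + 1) => (a : ℕ) < s) := by
      apply Finset.filter_congr; intro a _; simp [hiF]
    rw [if_pos hiF, heq, card_filter_val_lt _ s (by have := hF i hiF; omega)]
  · rw [if_neg hiF, Finset.filter_true_of_mem (fun a _ hb => absurd hb hiF)]
    simp


noncomputable def unifM : Measure ℝ := MeasureTheory.volume.restrict (Set.Icc 0 1)

instance : IsProbabilityMeasure unifM :=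
  ⟨by rw [unifM, Measure.restrict_apply MeasurableSet.univ, Set.univ_inter, Real.volume_Icc]; norm_num⟩

noncomputable def nu (n : ℕ) : Measure (Fin n → ℝ) := Measure.pi (fun _ => unifM)

instance : IsProbabilityMeasure (nu n) := by rw [nu]; infer_instance

/-- pattern set of a permutation -/
def Pat (σ : Equiv.Perm (Fin n)) : Set (Fin n → ℝ) := {x | StrictMono (x ∘ σ)}

lemma measurableSet_Pat (σ : Equiv.Perm (Fin n)) : MeasurableSet (Pat σ) := by
  have h : Pat σ = ⋂ (a : Fin n), ⋂ (b : Fin n), {x : Fin n → ℝ | a < b → x (σ a) < x (σ b)} := by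
    ext x
    simp only [Pat, Set.mem_setOf_eq, Set.mem_iInter, StrictMono, Function.comp]
  rw [h]
  refine MeasurableSet.iInter fun a => MeasurableSet.iInter fun b => ?_
  by_cases hab : a < b
  · simp only [hab, true_implies]
    exact measurableSet_lt (measurable_pi_apply _) (measurable_pi_apply _)
  · simp only [hab, false_implies]
    exact MeasurableSet.univ

lemma comp_measurePreserving (σ : Equiv.Perm (Fin n)) :
    MeasurePreserving (fun x : Fin n → ℝ => x ∘ σ) (nu n) (nu n) := by
  have hco : ⇑(MeasurableEquiv.piCongrLeft (fun _ : Fin n => ℝ) σ.symm)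
      = fun x : Fin n → ℝ => x ∘ σ := by
    funext x b
    rw [MeasurableEquiv.coe_piCongrLeft]
    simp [Equiv.piCongrLeft_apply, eq_rec_constant]
  have := measurePreserving_piCongrLeft (fun _ : Fin n => unifM) σ.symm
  rw [hco] at this
  exact this

lemma nu_Pat (σ : Equiv.Perm (Fin n)) : nu n (Pat σ) = nu n (Pat 1) := by
  have hpre : Pat σ = (fun x : Fin n → ℝ => x ∘ σ) ⁻¹' (Pat 1) := by
    ext x
    simp only [Pat, Set.mem_preimage, Set.mem_setOf_eq, Equiv.Perm.coe_one, Function.comp_id]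
  rw [hpre]
  exact (comp_measurePreserving σ).measure_preimage (measurableSet_Pat 1).nullMeasurableSet

lemma Pat_disjoint : Pairwise (Function.onFun Disjoint (Pat (n := n))) := by
  intro σ σ' hne
  rw [Function.onFun, Set.disjoint_left]
  intro x hx hx'
  apply hne
  -- e := σ.symm ∘ σ' is strictly monotone, hence identity
  have hx1 : StrictMono (x ∘ σ) := hx
  have hx2 : StrictMono (x ∘ σ') := hx'
  set e : Equiv.Perm (Fin n) := σ'.trans σ.symm with he
  have hcomp : (x ∘ σ) ∘ e = x ∘ σ' := by
    funext j; simp [he, Equiv.trans_apply]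
  have hemono : StrictMono (⇑e) := by
    intro a b hab
    have h2 : (x ∘ σ) (e a) < (x ∘ σ) (e b) := by
      have h3 := hx2 hab
      rw [← hcomp] at h3
      exact h3
    exact hx1.lt_iff_lt.mp h2
  have hesymm : StrictMono (⇑e.symm) := by
    intro a b hab
    have : e (e.symm a) < e (e.symm b) := by simpa using hab
    exact hemono.lt_iff_lt.mp this
  haveI : WellFoundedLT (Fin n) := inferInstance
  have hid : ∀ j, e j = j := by
    intro j
    have h1 : j ≤ e j := hemono.le_apply
    have h2 : j ≤ e.symm j := hesymm.le_apply
    have h3 : e j ≤ e (e.symm j) := hemono.monotone h2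
    rw [Equiv.apply_symm_apply] at h3
    exact le_antisymm h3 h1
  apply Equiv.ext
  intro j
  have h := hid j
  simp only [he, Equiv.trans_apply] at h
  exact ((Equiv.symm_apply_eq σ).1 h).symm

lemma Pat_cover {x : Fin n → ℝ} (hx : Function.Injective x) : ∃ σ, x ∈ Pat σ := by
  refine ⟨Tuple.sort x, ?_⟩
  have hmono : Monotone (x ∘ Tuple.sort x) := Tuple.monotone_sort x
  exact hmono.strictMono_of_injective (hx.comp (Tuple.sort x).injective)



lemma nu_noninj (hties : ∀ i j : Fin n, i ≠ j → nu n {x | x i = x j} = 0) :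
    nu n {x : Fin n → ℝ | ¬ Function.Injective x} = 0 := by
  have hsub : {x : Fin n → ℝ | ¬ Function.Injective x}
      ⊆ ⋃ p : Fin n × Fin n, {x : Fin n → ℝ | p.1 ≠ p.2 ∧ x p.1 = x p.2} := by
    intro x hx
    simp only [Set.mem_setOf_eq, Function.Injective] at hx
    push_neg at hx
    obtain ⟨a, b, hab, hne⟩ := hx
    exact Set.mem_iUnion.2 ⟨(a, b), hne, hab⟩
  refine measure_mono_null hsub (measure_iUnion_null fun p => ?_)
  by_cases hp : p.1 = p.2
  · have : {x : Fin n → ℝ | p.1 ≠ p.2 ∧ x p.1 = x p.2} = ∅ := by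
      ext x; simp [hp]
    simp [this]
  · exact measure_mono_null (fun x hx => hx.2) (hties p.1 p.2 hp)

lemma nu_iUnion_Pat (hties : ∀ i j : Fin n, i ≠ j → nu n {x | x i = x j} = 0) :
    nu n (⋃ σ : Equiv.Perm (Fin n), Pat σ) = 1 := by
  have hle : nu n (⋃ σ : Equiv.Perm (Fin n), Pat σ) ≤ 1 := prob_le_one
  refine le_antisymm hle ?_
  have hcover : (Set.univ : Set (Fin n → ℝ))
      ⊆ (⋃ σ : Equiv.Perm (Fin n), Pat σ) ∪ {x | ¬ Function.Injective x} := by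
    intro x _
    by_cases hx : Function.Injective x
    · exact Or.inl (Set.mem_iUnion.2 (Pat_cover hx))
    · exact Or.inr hx
  calc (1 : ℝ≥0∞) = nu n Set.univ := (measure_univ).symm
    _ ≤ nu n ((⋃ σ : Equiv.Perm (Fin n), Pat σ) ∪ {x | ¬ Function.Injective x}) :=
        measure_mono hcover
    _ ≤ nu n (⋃ σ : Equiv.Perm (Fin n), Pat σ) + nu n {x | ¬ Function.Injective x} :=
        measure_union_le _ _
    _ = nu n (⋃ σ : Equiv.Perm (Fin n), Pat σ) := by rw [nu_noninj hties, add_zero]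

lemma nu_Pat_one (hties : ∀ i j : Fin n, i ≠ j → nu n {x | x i = x j} = 0) :
    nu n (Pat (1 : Equiv.Perm (Fin n))) = ((n.factorial : ℝ≥0∞))⁻¹ := by
  have hsum : ∑ σ : Equiv.Perm (Fin n), nu n (Pat σ) = 1 := by
    rw [← tsum_fintype (L := SummationFilter.unconditional _), ← measure_iUnion Pat_disjoint measurableSet_Pat, nu_iUnion_Pat hties]
  have hconst : ∑ σ : Equiv.Perm (Fin n), nu n (Pat σ)
      = (n.factorial : ℝ≥0∞) * nu n (Pat 1) := by
    rw [Finset.sum_congr rfl (fun σ _ => nu_Pat σ), Finset.sum_const, Finset.card_univ,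
      Fintype.card_perm, Fintype.card_fin, nsmul_eq_mul]
  have hcard : (n.factorial : ℝ≥0∞) * nu n (Pat 1) = 1 := by rw [← hconst, hsum]
  have hne : (n.factorial : ℝ≥0∞) ≠ 0 := Nat.cast_ne_zero.2 n.factorial_ne_zero
  have htop : (n.factorial : ℝ≥0∞) ≠ ⊤ := ENNReal.natCast_ne_top _
  calc nu n (Pat 1) = ((n.factorial : ℝ≥0∞))⁻¹ * ((n.factorial : ℝ≥0∞) * nu n (Pat 1)) := by
        rw [← mul_assoc, ENNReal.inv_mul_cancel hne htop, one_mul]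
    _ = ((n.factorial : ℝ≥0∞))⁻¹ := by rw [hcard, mul_one]

def B (s : ℕ) (i : Fin n) : Set (Fin n → ℝ) :=
  {x | (univ.filter (fun j => j < i ∧ x j < x i)).card < s}

lemma measurableSet_B (s : ℕ) (i : Fin n) : MeasurableSet (B s i) := by
  have hf : Measurable (fun x : Fin n → ℝ =>
      (univ.filter (fun j => j < i ∧ x j < x i)).card) := by
    have : (fun x : Fin n → ℝ => (univ.filter (fun j => j < i ∧ x j < x i)).card)
        = fun x => ∑ j : Fin n, if j < i ∧ x j < x i then 1 else 0 := by
      funext x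
      rw [Finset.card_filter]
    rw [this]
    refine Finset.measurable_sum _ (fun j _ => ?_)
    refine Measurable.ite ?_ measurable_const measurable_const
    by_cases hj : j < i
    · have : {x : Fin n → ℝ | j < i ∧ x j < x i} = {x | x j < x i} := by
        ext x; simp [hj]
      rw [this]
      exact measurableSet_lt (measurable_pi_apply _) (measurable_pi_apply _)
    · have : {x : Fin n → ℝ | j < i ∧ x j < x i} = ∅ := by
        ext x; simp [hj]
      rw [this]
      exact MeasurableSet.empty
  have : B s i = (fun x : Fin n → ℝ =>
      (univ.filter (fun j => j < i ∧ x j < x i)).card) ⁻¹' (Set.Iio s) := rfl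
  rw [this]
  exact hf (MeasurableSpace.measurableSet_top)

lemma mem_B_of_Pat {σ : Equiv.Perm (Fin n)} {x : Fin n → ℝ} (hx : x ∈ Pat σ) (s : ℕ)
    (i : Fin n) : x ∈ B s i ↔ L σ.symm i < s := by
  have hiff : ∀ j k : Fin n, x j < x k ↔ σ.symm j < σ.symm k := by
    intro j k
    have h1 : x j = (x ∘ σ) (σ.symm j) := by simp
    have h2 : x k = (x ∘ σ) (σ.symm k) := by simp
    rw [h1, h2]
    exact hx.lt_iff_lt
  have hfe : univ.filter (fun j => j < i ∧ x j < x i)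
      = univ.filter (fun j => j < i ∧ σ.symm j < σ.symm i) := by
    apply Finset.filter_congr
    intro j _
    rw [hiff]
  unfold B L
  rw [Set.mem_setOf_eq, hfe]

lemma nu_biInter_B (s : ℕ) (F : Finset (Fin n))
    (hties : ∀ i j : Fin n, i ≠ j → nu n {x | x i = x j} = 0) :
    nu n (⋂ i ∈ F, B s i)
      = ((univ.filter (fun τ : Equiv.Perm (Fin n) => ∀ i ∈ F, L τ i < s)).card : ℝ≥0∞)
        * ((n.factorial : ℝ≥0∞))⁻¹ := by
  classical
  set U : Set (Fin n → ℝ) := ⋃ σ : Equiv.Perm (Fin n), Pat σ with hU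
  have hBmeas : MeasurableSet (⋂ i ∈ F, B s i) :=
    MeasurableSet.biInter (Set.to_countable _) (fun i _ => measurableSet_B s i)
  have hUmeas : MeasurableSet U := MeasurableSet.iUnion measurableSet_Pat
  have hUc : nu n Uᶜ = 0 := by
    refine measure_mono_null ?_ (nu_noninj hties)
    intro x hx
    simp only [Set.mem_compl_iff, hU, Set.mem_iUnion, not_exists] at hx
    intro hinj
    obtain ⟨σ, hσ⟩ := Pat_cover hinj
    exact hx σ hσ
  have h1 : nu n (⋂ i ∈ F, B s i) = nu n ((⋂ i ∈ F, B s i) ∩ U) := by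
    have := measure_inter_add_diff (μ := nu n) (⋂ i ∈ F, B s i) hUmeas
    have hdiff : nu n ((⋂ i ∈ F, B s i) \ U) = 0 :=
      measure_mono_null (fun x hx => hx.2) hUc
    rw [← this, hdiff, add_zero]
  have h2 : (⋂ i ∈ F, B s i) ∩ U = ⋃ σ : Equiv.Perm (Fin n), ((⋂ i ∈ F, B s i) ∩ Pat σ) := by
    rw [hU, Set.inter_iUnion]
  have h3 : ∀ σ : Equiv.Perm (Fin n), (⋂ i ∈ F, B s i) ∩ Pat σ
      = if (∀ i ∈ F, L σ.symm i < s) then Pat σ else ∅ := by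
    intro σ
    by_cases hg : ∀ i ∈ F, L σ.symm i < s
    · rw [if_pos hg, Set.inter_eq_right]
      intro x hx
      refine Set.mem_iInter₂.2 (fun i hi => ?_)
      exact (mem_B_of_Pat hx s i).2 (hg i hi)
    · rw [if_neg hg, Set.eq_empty_iff_forall_notMem]
      rintro x ⟨hxB, hxP⟩
      refine hg (fun i hi => ?_)
      exact (mem_B_of_Pat hxP s i).1 (Set.mem_iInter₂.1 hxB i hi)
  have hdisj : Pairwise (Function.onFun Disjoint
      (fun σ : Equiv.Perm (Fin n) => (⋂ i ∈ F, B s i) ∩ Pat σ)) := by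
    intro σ σ' hne
    exact (Pat_disjoint hne).mono Set.inter_subset_right Set.inter_subset_right
  have h4 : nu n ((⋂ i ∈ F, B s i) ∩ U)
      = ∑ σ : Equiv.Perm (Fin n), nu n ((⋂ i ∈ F, B s i) ∩ Pat σ) := by
    rw [h2, measure_iUnion hdisj (fun σ => hBmeas.inter (measurableSet_Pat σ)), tsum_fintype]
  have h5 : ∀ σ : Equiv.Perm (Fin n), nu n ((⋂ i ∈ F, B s i) ∩ Pat σ)
      = if (∀ i ∈ F, L σ.symm i < s) then ((n.factorial : ℝ≥0∞))⁻¹ else 0 := by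
    intro σ
    rw [h3 σ]
    by_cases hg : ∀ i ∈ F, L σ.symm i < s
    · rw [if_pos hg, if_pos hg, nu_Pat σ, nu_Pat_one hties]
    · rw [if_neg hg, if_neg hg, measure_empty]
  have h6 : ∑ σ : Equiv.Perm (Fin n), nu n ((⋂ i ∈ F, B s i) ∩ Pat σ)
      = ((univ.filter (fun σ : Equiv.Perm (Fin n) => ∀ i ∈ F, L σ.symm i < s)).card : ℝ≥0∞)
        * ((n.factorial : ℝ≥0∞))⁻¹ := by
    rw [Finset.sum_congr rfl (fun σ _ => h5 σ), ← Finset.sum_filter, Finset.sum_const,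
      nsmul_eq_mul]
  have h7 : (univ.filter (fun σ : Equiv.Perm (Fin n) => ∀ i ∈ F, L σ.symm i < s)).card
      = (univ.filter (fun τ : Equiv.Perm (Fin n) => ∀ i ∈ F, L τ i < s)).card := by
    apply Finset.card_nbij (fun σ => σ.symm)
    · intro σ hσ
      simp only [Finset.coe_filter, mem_filter, mem_univ, true_and, Set.mem_setOf_eq] at hσ ⊢
      exact hσ
    · intro σ hσ σ' hσ' hss
      simpa using congrArg Equiv.symm hss
    · intro τ hτ
      simp only [Finset.coe_filter, mem_univ, true_and, Set.mem_setOf_eq] at hτ ⊢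
      exact ⟨τ.symm, hτ, by simp⟩
  rw [h1, h4, h6, h7]


lemma fin_prod_succ : (∏ i : Fin n, ((i : ℕ) + 1)) = n.factorial := by
  rw [Fin.prod_univ_eq_prod_range (fun i => i + 1) n, Finset.prod_range_add_one_eq_factorial]

lemma ratio_eq (s : ℕ) (F : Finset (Fin n)) :
    ((∏ i : Fin n, (if i ∈ F then s else (i : ℕ) + 1) : ℕ) : ℝ≥0∞) * ((n.factorial : ℝ≥0∞))⁻¹
      = ∏ i ∈ F, ((s : ℝ≥0∞) / (((i : ℕ) : ℝ≥0∞) + 1)) := by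
  classical
  have hne : ∀ i : Fin n, (((i : ℕ) : ℝ≥0∞) + 1) ≠ 0 := fun i => ne_of_gt (lt_of_lt_of_le zero_lt_one le_add_self)
  have htop : ∀ i : Fin n, (((i : ℕ) : ℝ≥0∞) + 1) ≠ ∞ := fun i => by
    simp [ENNReal.add_ne_top]
  have hfact : (n.factorial : ℝ≥0∞) = ∏ i : Fin n, (((i : ℕ) : ℝ≥0∞) + 1) := by
    rw [← fin_prod_succ]
    push_cast
    rfl
  have hnum : ((∏ i : Fin n, (if i ∈ F then s else (i : ℕ) + 1) : ℕ) : ℝ≥0∞)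
      = (∏ i ∈ F, (s : ℝ≥0∞)) * ∏ i ∈ Fᶜ, (((i : ℕ) : ℝ≥0∞) + 1) := by
    push_cast
    rw [← Finset.prod_mul_prod_compl F]
    congr 1
    · exact Finset.prod_congr rfl fun i hi => by rw [if_pos hi]
    · refine Finset.prod_congr rfl fun i hi => ?_
      rw [if_neg (Finset.mem_compl.1 hi)]
  have hden : (n.factorial : ℝ≥0∞)
      = (∏ i ∈ F, (((i : ℕ) : ℝ≥0∞) + 1)) * ∏ i ∈ Fᶜ, (((i : ℕ) : ℝ≥0∞) + 1) := by
    rw [hfact, ← Finset.prod_mul_prod_compl F]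
  set A := ∏ i ∈ F, (s : ℝ≥0∞)
  set Bc := ∏ i ∈ Fᶜ, (((i : ℕ) : ℝ≥0∞) + 1) with hBc
  set Cc := ∏ i ∈ F, (((i : ℕ) : ℝ≥0∞) + 1) with hCc
  have hBc0 : Bc ≠ 0 := Finset.prod_ne_zero_iff.2 fun i _ => hne i
  have hBctop : Bc ≠ ∞ := ENNReal.prod_ne_top fun i _ => htop i
  have hCc0 : Cc ≠ 0 := Finset.prod_ne_zero_iff.2 fun i _ => hne i
  have hCctop : Cc ≠ ∞ := ENNReal.prod_ne_top fun i _ => htop i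
  rw [hnum, hden, ENNReal.mul_inv (Or.inl hCc0) (Or.inl hCctop)]
  have hinv : ∏ i ∈ F, ((s : ℝ≥0∞) / (((i : ℕ) : ℝ≥0∞) + 1)) = A * Cc⁻¹ := by
    rw [Finset.prod_congr rfl (fun i (_ : i ∈ F) => div_eq_mul_inv (s : ℝ≥0∞) _),
      Finset.prod_mul_distrib, hCc,
      ← ENNReal.prod_inv_distrib (fun i _ j _ _ => Or.inl (hne i))]
  rw [hinv]
  calc A * Bc * (Cc⁻¹ * Bc⁻¹) = A * Cc⁻¹ * (Bc * Bc⁻¹) := by ring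
    _ = A * Cc⁻¹ := by rw [ENNReal.mul_inv_cancel hBc0 hBctop, mul_one]

end Reservoir

open MeasureTheory ProbabilityTheory

/-- Let `w_1, …, w_n` be i.i.d. uniform on `[0,1]` (hence a.s. pairwise distinct), `1 ≤ s < n`.
Here the variables are 0-indexed, so `w i` plays the role of `w_{i+1}`. For each index `i`,
let `C i` be the event that `w i` is among the `s` smallest of the first `i+1` weights
`w 0, …, w i` (i.e. fewer than `s` of the earlier weights are strictly below `w i`).
Then the events `C i` for `s ≤ i` (1-indexed: `s < i ≤ n`) are mutually independent and
`Pr[C i] = s/(i+1)` (1-indexed: `s/i`). -/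
theorem reservoir_change_events_independent
    {Ω : Type*} [MeasurableSpace Ω] {μ : Measure Ω} [IsProbabilityMeasure μ]
    (n s : ℕ) (hs : 1 ≤ s) (hsn : s < n)
    (w : Fin n → Ω → ℝ)
    (hmeas : ∀ i, Measurable (w i))
    (hindep : iIndepFun w μ)
    (hunif : ∀ i, μ.map (w i) = volume.restrict (Set.Icc (0 : ℝ) 1))
    (C : Fin n → Set Ω)
    (hC : ∀ i, C i =
      {ω | (Finset.univ.filter (fun j => j < i ∧ w j ω < w i ω)).card < s}) :
    (∀ i : Fin n, s ≤ (i : ℕ) → μ (C i) = ENNReal.ofReal ((s : ℝ) / ((i : ℕ) + 1))) ∧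
      iIndepSet (fun i : {i : Fin n // s ≤ (i : ℕ)} => C i.val) μ := by
  classical
  set W : Ω → (Fin n → ℝ) := fun ω i => w i ω with hW
  have hWmeas : Measurable W := measurable_pi_lambda _ hmeas
  have hjoint : μ.map W = Reservoir.nu n := by
    rw [Reservoir.nu]
    symm
    apply Measure.pi_eq
    intro t ht
    rw [Measure.map_apply hWmeas (MeasurableSet.univ_pi ht)]
    have hpre : W ⁻¹' (Set.pi Set.univ t) = ⋂ i, w i ⁻¹' t i := by
      ext ω
      simp [Set.mem_pi, hW]
    rw [hpre, hindep.meas_iInter (fun i => ⟨t i, ht i, rfl⟩)]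
    refine Finset.prod_congr rfl fun i _ => ?_
    rw [show Reservoir.unifM = volume.restrict (Set.Icc (0:ℝ) 1) from rfl, ← hunif i,
      Measure.map_apply (hmeas i) (ht i)]
  have hCW : ∀ i, C i = W ⁻¹' (Reservoir.B s i) := by
    intro i
    rw [hC i]
    rfl
  have hCmeas : ∀ i, MeasurableSet (C i) := by
    intro i
    rw [hCW i]
    exact hWmeas (Reservoir.measurableSet_B s i)
  have hties : ∀ i j : Fin n, i ≠ j → Reservoir.nu n {x : Fin n → ℝ | x i = x j} = 0 := by
    intro i j hij
    have hdiag : MeasurableSet {x : Fin n → ℝ | x i = x j} :=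
      measurableSet_eq_fun (measurable_pi_apply i) (measurable_pi_apply j)
    rw [← hjoint, Measure.map_apply hWmeas hdiag]
    have hIF : IndepFun (w i) (w j) μ := hindep.indepFun hij
    have hmap : μ.map (fun ω => (w i ω, w j ω)) = (μ.map (w i)).prod (μ.map (w j)) :=
      (indepFun_iff_map_prod_eq_prod_map_map (hmeas i).aemeasurable
        (hmeas j).aemeasurable).1 hIF
    have hdiag2 : MeasurableSet {p : ℝ × ℝ | p.1 = p.2} :=
      measurableSet_eq_fun measurable_fst measurable_snd
    have hpre2 : W ⁻¹' {x : Fin n → ℝ | x i = x j}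
        = (fun ω => (w i ω, w j ω)) ⁻¹' {p : ℝ × ℝ | p.1 = p.2} := rfl
    rw [hpre2, ← Measure.map_apply ((hmeas i).prodMk (hmeas j)) hdiag2, hmap,
      hunif i, hunif j, Measure.prod_apply hdiag2]
    have hz : ∀ a : ℝ, (volume.restrict (Set.Icc (0:ℝ) 1))
        (Prod.mk a ⁻¹' {p : ℝ × ℝ | p.1 = p.2}) = 0 := by
      intro a
      have : Prod.mk a ⁻¹' {p : ℝ × ℝ | p.1 = p.2} = {a} := by
        ext b
        simp [eq_comm]
      rw [this]
      exact measure_singleton a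
    simp [hz]
  have hsingle : ∀ F : Finset (Fin n), (∀ i ∈ F, s ≤ (i : ℕ)) →
      μ (⋂ i ∈ F, C i) = ∏ i ∈ F, ((s : ℝ≥0∞) / (((i : ℕ) : ℝ≥0∞) + 1)) := by
    intro F hF
    have hpre : (⋂ i ∈ F, C i) = W ⁻¹' (⋂ i ∈ F, Reservoir.B s i) := by
      simp only [hCW, Set.preimage_iInter]
    have hmB : MeasurableSet (⋂ i ∈ F, Reservoir.B (n := n) s i) :=
      MeasurableSet.biInter (Set.to_countable _) (fun i _ => Reservoir.measurableSet_B s i)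
    have h2 : μ (W ⁻¹' (⋂ i ∈ F, Reservoir.B s i))
        = (μ.map W) (⋂ i ∈ F, Reservoir.B s i) := (Measure.map_apply hWmeas hmB).symm
    rw [hpre, h2, hjoint, Reservoir.nu_biInter_B s F hties, Reservoir.card_goodPerms s F hF,
      Reservoir.ratio_eq s F]
  refine ⟨?_, ?_⟩
  · intro i hi
    have h1 := hsingle {i} (by simpa using hi)
    rw [Finset.set_biInter_singleton, Finset.prod_singleton] at h1
    rw [h1, ENNReal.ofReal_div_of_pos (by positivity), ENNReal.ofReal_natCast]
    congr 1
    rw [show ((i : ℕ) : ℝ) + 1 = (((i : ℕ) + 1 : ℕ) : ℝ) from by push_cast; ring,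
      ENNReal.ofReal_natCast]
    push_cast
    ring
  · refine (iIndepSet_iff_meas_biInter (fun i : {i : Fin n // s ≤ (i : ℕ)} => hCmeas i.val)).2
      fun S => ?_
    have h1 : (⋂ i ∈ S, C i.val) = ⋂ i ∈ S.image Subtype.val, C i :=
      (Finset.set_biInter_finset_image).symm
    have hFim : ∀ i ∈ S.image Subtype.val, s ≤ (i : ℕ) := by
      intro i hi
      obtain ⟨j, hj, rfl⟩ := Finset.mem_image.1 hi
      exact j.2
    rw [h1, hsingle _ hFim, Finset.prod_image (fun a _ b _ h => Subtype.coe_injective h)]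
    refine Finset.prod_congr rfl fun j _ => ?_
    have h2 := hsingle {j.val} (by simpa using j.2)
    rw [Finset.set_biInter_singleton, Finset.prod_singleton] at h2
    exact h2.symm
end

section
/- Let w_1,…,w_n be i.i.d. random variables uniformly distributed on [0,1] (so almost surely pairwise distinct), and let 1 ≤ s < n. Let X be the number of indices i with s < i ≤ n such that w_i is among the s smallest values of w_1,…,w_i. Then Pr[X < s·(H_n − H_s)/2] ≤ exp(−s·(H_n − H_s)/8); in particular, the size-s reservoir sample changes at least s·(H_n − H_s)/2 times with probability at least 1 − exp(−s·(H_n − H_s)/8). -/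
open MeasureTheory ProbabilityTheory
open scoped ENNReal NNReal

section Aux

/-- prefix-inversion count (Lehmer code entry) -/
def lcode {n : ℕ} (π : Equiv.Perm (Fin n)) (i : Fin n) : ℕ :=
  (Finset.univ.filter (fun j => j < i ∧ π j < π i)).card

lemma lcode_last {n : ℕ} (π : Equiv.Perm (Fin (n+1))) :
    lcode π (Fin.last n) = (π (Fin.last n) : ℕ) := by
  unfold lcode
  have h1 : (Finset.univ.filter (fun j => j < Fin.last n ∧ π j < π (Fin.last n)))
      = Finset.univ.filter (fun j => π j < π (Fin.last n)) := by
    apply Finset.filter_congr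
    intro j _
    constructor
    · exact fun h => h.2
    · intro h
      exact ⟨Fin.lt_last_iff_ne_last.mpr (fun hj => by subst hj; exact lt_irrefl _ h), h⟩
  rw [h1]
  have h2 : (Finset.univ.filter (fun j => π j < π (Fin.last n))).card
      = (Finset.univ.filter (fun v => v < π (Fin.last n))).card := by
    apply Finset.card_bij' (fun j _ => π j) (fun v _ => π.symm v)
    · intro j hj; simpa using (Finset.mem_filter.mp hj).2
    · intro v hv; simp only [Finset.mem_filter, Finset.mem_univ, true_and] at hv ⊢
      simpa using hv
    · intro j _; simp
    · intro v _; simp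
  rw [h2]
  have : Finset.univ.filter (fun v => v < π (Fin.last n)) = Finset.Iio (π (Fin.last n)) := by
    ext v; simp
  rw [this, Fin.card_Iio]

/-- the peeling bijection -/
def peel {n : ℕ} (p : Fin (n+1) × Equiv.Perm (Fin n)) : Equiv.Perm (Fin (n+1)) :=
  ((finSuccEquiv' (Fin.last n)).trans (Equiv.optionCongr p.2)).trans (finSuccEquiv' p.1).symm

lemma peel_last {n : ℕ} (k : Fin (n+1)) (τ : Equiv.Perm (Fin n)) :
    peel (k, τ) (Fin.last n) = k := by
  simp [peel, finSuccEquiv'_at, finSuccEquiv'_symm_none]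

lemma peel_castSucc {n : ℕ} (k : Fin (n+1)) (τ : Equiv.Perm (Fin n)) (j : Fin n) :
    peel (k, τ) (Fin.castSucc j) = k.succAbove (τ j) := by
  simp [peel, finSuccEquiv'_below (Fin.castSucc_lt_last j), finSuccEquiv'_symm_some]

lemma peel_bijective {n : ℕ} : Function.Bijective (peel (n := n)) := by
  rw [Fintype.bijective_iff_injective_and_card]
  constructor
  · rintro ⟨k, τ⟩ ⟨k', τ'⟩ h
    have hk : k = k' := by rw [← peel_last k τ, ← peel_last k' τ', h]
    subst hk
    have hτ : τ = τ' := by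
      ext j
      have := congrArg (fun π : Equiv.Perm (Fin (n+1)) => π (Fin.castSucc j)) h
      simp only [peel_castSucc] at this
      exact congrArg Fin.val (Fin.succAbove_right_injective this)
    simp [hτ]
  · simp [Fintype.card_perm, Nat.factorial_succ]

lemma lcode_peel_castSucc {n : ℕ} (k : Fin (n+1)) (τ : Equiv.Perm (Fin n)) (i : Fin n) :
    lcode (peel (k, τ)) (Fin.castSucc i) = lcode τ i := by
  unfold lcode
  have : (Finset.univ.filter
        (fun j => j < Fin.castSucc i ∧ peel (k, τ) j < peel (k, τ) (Fin.castSucc i)))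
      = (Finset.univ.filter (fun j => j < i ∧ τ j < τ i)).map Fin.castSuccEmb := by
    ext j
    simp only [Finset.mem_filter, Finset.mem_univ, true_and, Finset.mem_map,
      Fin.coe_castSuccEmb]
    constructor
    · rintro ⟨h1, h2⟩
      have hne : j ≠ Fin.last n := Fin.ne_last_of_lt (lt_of_lt_of_le h1 (Fin.le_last _))
      refine ⟨j.castPred hne, ⟨?_, ?_⟩, Fin.castSucc_castPred j hne⟩
      · rw [← Fin.castSucc_lt_castSucc_iff, Fin.castSucc_castPred]
        exact h1
      · rw [← Fin.succAbove_lt_succAbove_iff (p := k), ← peel_castSucc k τ,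
          ← peel_castSucc k τ, Fin.castSucc_castPred]
        exact h2
    · rintro ⟨j', ⟨h1, h2⟩, rfl⟩
      rw [peel_castSucc, peel_castSucc]
      exact ⟨Fin.castSucc_lt_castSucc_iff.mpr h1, Fin.succAbove_lt_succAbove_iff.mpr h2⟩
  rw [this, Finset.card_map]

lemma lehmer_sum (n : ℕ) (g : ℕ → ℕ → ℝ) :
    ∑ π : Equiv.Perm (Fin n), ∏ i : Fin n, g i (lcode π i)
      = ∏ i : Fin n, ∑ k ∈ Finset.range (i + 1), g i k := by
  induction n generalizing g with
  | zero => simp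
  | succ n ih =>
    rw [← Fintype.sum_bijective peel peel_bijective _ _ (fun _ => rfl)]
    rw [Fintype.sum_prod_type]
    have key : ∀ (k : Fin (n+1)) (τ : Equiv.Perm (Fin n)),
        ∏ i : Fin (n+1), g i (lcode (peel (k, τ)) i)
          = (∏ i : Fin n, g i (lcode τ i)) * g n k := by
      intro k τ
      rw [Fin.prod_univ_castSucc]
      congr 1
      · apply Finset.prod_congr rfl
        intro i _
        rw [lcode_peel_castSucc]
        norm_num
      · rw [lcode_last, peel_last]
        norm_num
    calc ∑ k : Fin (n+1), ∑ τ : Equiv.Perm (Fin n), ∏ i : Fin (n+1), g i (lcode (peel (k, τ)) i)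
        = ∑ k : Fin (n+1), ∑ τ : Equiv.Perm (Fin n), (∏ i : Fin n, g i (lcode τ i)) * g n k := by
          refine Finset.sum_congr rfl fun k _ => Finset.sum_congr rfl fun τ _ => key k τ
      _ = (∑ τ : Equiv.Perm (Fin n), ∏ i : Fin n, g i (lcode τ i)) * ∑ k : Fin (n+1), g n k := by
          rw [Finset.sum_comm, Finset.sum_mul]
          refine Finset.sum_congr rfl fun τ _ => ?_
          rw [Finset.mul_sum]
      _ = (∏ i : Fin n, ∑ k ∈ Finset.range (i+1), g i k) * ∑ k ∈ Finset.range (n+1), g n k := by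
          rw [ih, Fin.sum_univ_eq_sum_range]
      _ = _ := by
          rw [Fin.prod_univ_castSucc]
          norm_num

/-- number of "sample change" indices of a permutation -/
def mcount (s : ℕ) {n : ℕ} (π : Equiv.Perm (Fin n)) : ℕ :=
  (Finset.univ.filter (fun i : Fin n => s ≤ (i : ℕ) ∧ lcode π i < s)).card

lemma sum_pow_half (n s : ℕ) :
    ∑ π : Equiv.Perm (Fin n), ((1:ℝ)/2) ^ (mcount s π)
      = ∏ i ∈ Finset.range n, (if s ≤ i then ((i:ℝ) + 1 - s/2) else ((i:ℝ) + 1)) := by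
  classical
  set g : ℕ → ℕ → ℝ := fun i k => if s ≤ i ∧ k < s then (1/2 : ℝ) else 1 with hg
  have hπ : ∀ π : Equiv.Perm (Fin n),
      ((1:ℝ)/2) ^ (mcount s π) = ∏ i : Fin n, g i (lcode π i) := by
    intro π
    rw [← Finset.prod_filter_mul_prod_filter_not Finset.univ
      (fun i : Fin n => s ≤ (i:ℕ) ∧ lcode π i < s)]
    have h1 : ∏ i ∈ Finset.univ.filter (fun i : Fin n => s ≤ (i:ℕ) ∧ lcode π i < s),
        g i (lcode π i) = ((1:ℝ)/2) ^ (mcount s π) := by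
      rw [Finset.prod_congr rfl (fun i hi => ?_), Finset.prod_const, mcount]
      simp only [Finset.mem_filter] at hi
      simp [hg, hi.2]
    have h2 : ∏ i ∈ Finset.univ.filter (fun i : Fin n => ¬(s ≤ (i:ℕ) ∧ lcode π i < s)),
        g i (lcode π i) = 1 := by
      apply Finset.prod_eq_one
      intro i hi
      simp only [Finset.mem_filter] at hi
      simp [hg, hi.2]
    rw [h1, h2, mul_one]
  rw [Finset.sum_congr rfl (fun π _ => hπ π), lehmer_sum,
    ← Fin.prod_univ_eq_prod_range (fun j => if s ≤ j then ((j:ℝ) + 1 - s/2) else ((j:ℝ) + 1)) n]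
  apply Finset.prod_congr rfl
  intro i _
  by_cases hsi : s ≤ (i : ℕ)
  · have hsi1 : s ≤ i + 1 := hsi.trans (Nat.le_succ i)
    simp only [hg, hsi, true_and, if_pos]
    rw [Finset.sum_ite]
    have hf1 : (Finset.range (i+1)).filter (fun k => k < s) = Finset.range s := by
      ext k; simp only [Finset.mem_filter, Finset.mem_range]; omega
    have hf2 : (Finset.range (i+1)).filter (fun k => ¬ k < s) = Finset.Ico s (i+1) := by
      ext k; simp only [Finset.mem_filter, Finset.mem_range, Finset.mem_Ico]; omega
    rw [hf1, hf2, Finset.sum_const, Finset.sum_const, Finset.card_range, Nat.card_Ico]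
    have : ((i + 1 - s : ℕ) : ℝ) = (i:ℝ) + 1 - s := by
      push_cast [Nat.cast_sub hsi1]; ring
    simp only [nsmul_eq_mul, smul_eq_mul, this]
    ring
  · simp only [hg, hsi, false_and, if_neg, if_false]
    simp [Finset.sum_const, Finset.card_range]

end Aux

/-- Let `w_1, …, w_n` be i.i.d. uniform on `[0,1]` (hence a.s. pairwise distinct), `1 ≤ s < n`.
Here the variables are 0-indexed, so `w i` plays the role of `w_{i+1}`. Let `X` count the
indices `i` beyond the first `s` (1-indexed: `s < i ≤ n`) such that `w i` is among the `s`
smallest of `w 0, …, w i` (i.e. fewer than `s` of the earlier weights are strictly below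
`w i`) — that is, `X` is the number of times the size-`s` reservoir sample changes. Then
`Pr[X < s·(H_n − H_s)/2] ≤ exp(−s·(H_n − H_s)/8)`; equivalently, the sample changes at
least `s·(H_n − H_s)/2` times with probability at least `1 − exp(−s·(H_n − H_s)/8)`. -/
theorem reservoir_sample_changes_often
    {Ω : Type*} [MeasurableSpace Ω] {μ : Measure Ω} [IsProbabilityMeasure μ]
    (n s : ℕ) (hs : 1 ≤ s) (hsn : s < n)
    (w : Fin n → Ω → ℝ)
    (hmeas : ∀ i, Measurable (w i))
    (hindep : iIndepFun w μ)
    (hunif : ∀ i, μ.map (w i) = volume.restrict (Set.Icc (0 : ℝ) 1))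
    (X : Ω → ℕ)
    (hX : ∀ ω, X ω =
      (Finset.univ.filter (fun i : Fin n => s ≤ (i : ℕ) ∧
        (Finset.univ.filter (fun j => j < i ∧ w j ω < w i ω)).card < s)).card) :
    μ {ω | (X ω : ℝ) < s * (harmonicNumber n - harmonicNumber s) / 2}
      ≤ ENNReal.ofReal (Real.exp (-(s * (harmonicNumber n - harmonicNumber s)) / 8)) := by
  classical
  set H : ℝ := s * (harmonicNumber n - harmonicNumber s) with hHdef
  -- harmonic sum identity
  have hHsum : H = ∑ i ∈ Finset.Ico s n, (s : ℝ) / (i + 1) := by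
    have e1 : ∀ m : ℕ, harmonicNumber m = ∑ i ∈ Finset.Ico 1 (m+1), (1 : ℝ) / i := by
      intro m; rw [harmonicNumber, Finset.Ico_add_one_right_eq_Icc]
    have e2 : harmonicNumber n - harmonicNumber s
        = ∑ i ∈ Finset.Ico (s+1) (n+1), (1 : ℝ) / i := by
      rw [e1, e1, sub_eq_iff_eq_add']
      exact (Finset.sum_Ico_consecutive _ (by omega) (by omega)).symm
    have e3 : ∑ i ∈ Finset.Ico (s+1) (n+1), (1 : ℝ) / i
        = ∑ i ∈ Finset.Ico s n, (1 : ℝ) / (i + 1) := by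
      rw [Finset.sum_Ico_eq_sum_range, Finset.sum_Ico_eq_sum_range]
      have : n + 1 - (s + 1) = n - s := by omega
      rw [this]
      apply Finset.sum_congr rfl
      intro k _
      push_cast
      ring_nf
    rw [hHdef, e2, e3, Finset.mul_sum]
    apply Finset.sum_congr rfl
    intro i _
    ring
  have hHnonneg : 0 ≤ H := by
    rw [hHsum]
    exact Finset.sum_nonneg fun i _ => by positivity
  -- measurability of the inner counters and X
  have hinner : ∀ i : Fin n, Measurable (fun ω =>
      (Finset.univ.filter (fun j => j < i ∧ w j ω < w i ω)).card) := by
    intro i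
    simp_rw [Finset.card_filter]
    apply Finset.measurable_sum
    intro j _
    by_cases hji : j < i
    · simp only [hji, true_and]
      exact Measurable.ite (measurableSet_lt (hmeas j) (hmeas i))
        measurable_const measurable_const
    · simp [hji]
  have hmeasX : Measurable X := by
    have : X = fun ω => ∑ i : Fin n, if s ≤ (i : ℕ) ∧
        (Finset.univ.filter (fun j => j < i ∧ w j ω < w i ω)).card < s then 1 else 0 := by
      funext ω; rw [hX ω, Finset.card_filter]
    rw [this]
    apply Finset.measurable_sum
    intro i _
    by_cases hsi : s ≤ (i : ℕ)
    · simp only [hsi, true_and]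
      exact Measurable.ite ((hinner i) measurableSet_Iio) measurable_const measurable_const
    · simp [hsi]
  -- order events
  set E : Equiv.Perm (Fin n) → Set Ω :=
    fun σ => {ω | StrictMono (fun a => w (σ a) ω)} with hEdef
  have hEmeas : ∀ σ, MeasurableSet (E σ) := by
    intro σ
    have : E σ = ⋂ (a : Fin n), ⋂ (b : Fin n),
        {ω | a < b → w (σ a) ω < w (σ b) ω} := by
      ext ω
      simp only [hEdef, Set.mem_setOf_eq, Set.mem_iInter, StrictMono]
    rw [this]
    refine MeasurableSet.iInter fun a => MeasurableSet.iInter fun b => ?_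
    by_cases hab : a < b
    · simp only [hab, forall_true_left]
      exact measurableSet_lt (hmeas (σ a)) (hmeas (σ b))
    · simp only [hab, false_implies]
      exact MeasurableSet.univ
  -- the pushforward under the joint map is the product measure
  set Y : Ω → (Fin n → ℝ) := fun ω i => w i ω with hYdef
  have hYmeas : Measurable Y := measurable_pi_lambda _ (fun i => hmeas i)
  haveI hfac : IsProbabilityMeasure (volume.restrict (Set.Icc (0:ℝ) 1)) :=
    ⟨by simp [Real.volume_Icc]⟩
  set P : Measure (Fin n → ℝ) :=
    Measure.pi (fun _ : Fin n => volume.restrict (Set.Icc (0:ℝ) 1)) with hPdef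
  have hmap : μ.map Y = P := by
    refine (Measure.pi_eq fun sets hsets => ?_).symm
    rw [Measure.map_apply hYmeas (MeasurableSet.univ_pi hsets)]
    have hpre : Y ⁻¹' (Set.univ.pi sets) = ⋂ i ∈ Finset.univ, (w i) ⁻¹' (sets i) := by
      ext ω; simp [hYdef, Set.mem_pi]
    rw [hpre, hindep.measure_inter_preimage_eq_mul Finset.univ (fun i _ => hsets i)]
    refine Finset.prod_congr rfl fun i _ => ?_
    rw [← hunif i, Measure.map_apply (hmeas i) (hsets i)]
  -- regions in the cube
  set R : Equiv.Perm (Fin n) → Set (Fin n → ℝ) :=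
    fun σ => {v | StrictMono (fun a => v (σ a))} with hRdef
  have hRmeas : ∀ σ, MeasurableSet (R σ) := by
    intro σ
    have : R σ = ⋂ (a : Fin n), ⋂ (b : Fin n),
        {v : Fin n → ℝ | a < b → v (σ a) < v (σ b)} := by
      ext v
      simp only [hRdef, Set.mem_setOf_eq, Set.mem_iInter, StrictMono]
    rw [this]
    refine MeasurableSet.iInter fun a => MeasurableSet.iInter fun b => ?_
    by_cases hab : a < b
    · simp only [hab, forall_true_left]
      exact measurableSet_lt (measurable_pi_apply (σ a)) (measurable_pi_apply (σ b))
    · simp only [hab, false_implies]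
      exact MeasurableSet.univ
  have hEP : ∀ σ, μ (E σ) = P (R σ) := by
    intro σ
    have : E σ = Y ⁻¹' (R σ) := rfl
    rw [this, ← hmap, Measure.map_apply hYmeas (hRmeas σ)]
  -- all regions have the same measure
  have hEeq : ∀ σ, μ (E σ) = μ (E 1) := by
    intro σ
    rw [hEP, hEP]
    have hmp := measurePreserving_piCongrLeft
      (fun _ : Fin n => (volume.restrict (Set.Icc (0:ℝ) 1))) (σ : Fin n ≃ Fin n)
    have hpre : (MeasurableEquiv.piCongrLeft (fun _ : Fin n => ℝ)
        (σ : Fin n ≃ Fin n)) ⁻¹' (R σ) = R 1 := by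
      ext v
      have hv : ∀ a : Fin n, (MeasurableEquiv.piCongrLeft (fun _ : Fin n => ℝ)
          (σ : Fin n ≃ Fin n)) v (σ a) = v a :=
        fun a => MeasurableEquiv.piCongrLeft_apply_apply (β := fun _ : Fin n => ℝ)
          (σ : Fin n ≃ Fin n) v a
      simp only [Set.mem_preimage, hRdef, Set.mem_setOf_eq]
      rw [show (fun a => (MeasurableEquiv.piCongrLeft (fun _ : Fin n => ℝ)
          (σ : Fin n ≃ Fin n)) v (σ a)) = fun a => v a from funext hv]
      rfl
    calc P (R σ)
        = P ((MeasurableEquiv.piCongrLeft (fun _ : Fin n => ℝ)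
            (σ : Fin n ≃ Fin n)) ⁻¹' (R σ)) := (hmp.measure_preimage
              (hRmeas σ).nullMeasurableSet).symm
      _ = P (R 1) := by rw [hpre]
  -- disjointness
  have hEdisj : Pairwise (Function.onFun Disjoint E) := by
    intro σ σ' hne
    refine Set.disjoint_left.mpr fun ω hσ hσ' => hne ?_
    have hσ0 : StrictMono ((fun a => w a ω) ∘ σ) := hσ
    have hσ'0 : StrictMono ((fun a => w a ω) ∘ σ') := hσ'
    have hrange : Set.range ((fun a => w a ω) ∘ σ) = Set.range ((fun a => w a ω) ∘ σ') := by
      rw [Set.range_comp, Set.range_comp, σ.range_eq_univ, σ'.range_eq_univ]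
    haveI : WellFoundedLT (Fin n) := Finite.to_wellFoundedLT
    have hcomp : (fun a => w a ω) ∘ σ = (fun a => w a ω) ∘ σ' :=
      (hσ0.range_inj hσ'0).mp hrange
    have hvinj : Function.Injective (fun a => w a ω) := by
      have : (fun a => w a ω) = ((fun a => w a ω) ∘ σ) ∘ σ.symm := by
        funext a; simp
      rw [this]
      exact hσ0.injective.comp σ.symm.injective
    exact Equiv.ext fun a => hvinj (congrFun hcomp a)
  -- ties are null
  have hties : ∀ i j : Fin n, i ≠ j → μ {ω | w i ω = w j ω} = 0 := by
    intro i j hij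
    have hindep2 : IndepFun (w i) (w j) μ := hindep.indepFun hij
    have hmapij : μ.map (fun ω => (w i ω, w j ω)) = (μ.map (w i)).prod (μ.map (w j)) :=
      (indepFun_iff_map_prod_eq_prod_map_map (hmeas i).aemeasurable
        (hmeas j).aemeasurable).mp hindep2
    have hD : MeasurableSet {p : ℝ × ℝ | p.1 = p.2} :=
      measurableSet_eq_fun measurable_fst measurable_snd
    have : {ω | w i ω = w j ω} = (fun ω => (w i ω, w j ω)) ⁻¹' {p : ℝ × ℝ | p.1 = p.2} := rfl
    rw [this, ← Measure.map_apply ((hmeas i).prodMk (hmeas j)) hD, hmapij, hunif, hunif]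
    rw [Measure.prod_apply hD]
    have : ∀ x : ℝ, (volume.restrict (Set.Icc (0:ℝ) 1))
        (Prod.mk x ⁻¹' {p : ℝ × ℝ | p.1 = p.2}) = 0 := by
      intro x
      have : (Prod.mk x ⁻¹' {p : ℝ × ℝ | p.1 = p.2}) = {x} := by
        ext y; simp [eq_comm]
      rw [this]
      exact measure_singleton x
    simp [this]
  -- the union of order events is almost everything
  have hEcover : μ (⋃ σ, E σ)ᶜ = 0 := by
    have hsub : (⋃ σ, E σ)ᶜ ⊆ ⋃ (i : Fin n), ⋃ (j : Fin n),
        {ω | i ≠ j ∧ w i ω = w j ω} := by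
      intro ω hω
      by_contra hcon
      simp only [Set.mem_iUnion, not_exists, Set.mem_setOf_eq, not_and] at hcon
      have hvinj : Function.Injective (fun a => w a ω) := by
        intro a b hab
        by_contra hne
        exact hcon a b hne hab
      have hmono : Monotone ((fun a => w a ω) ∘ Tuple.sort (fun a => w a ω)) :=
        Tuple.monotone_sort _
      have hsm : StrictMono ((fun a => w a ω) ∘ Tuple.sort (fun a => w a ω)) :=
        hmono.strictMono_of_injective (hvinj.comp (Tuple.sort _).injective)
      exact hω (Set.mem_iUnion.mpr ⟨Tuple.sort (fun a => w a ω), hsm⟩)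
    refine measure_mono_null hsub ?_
    refine measure_iUnion_null fun i => measure_iUnion_null fun j => ?_
    by_cases hij : i = j
    · simp [hij]
    · exact measure_mono_null (fun ω hω => hω.2) (hties i j hij)
  -- each order event has measure 1/n!
  have hE1 : μ (E 1) = ((Nat.factorial n : ℝ≥0∞))⁻¹ := by
    have hU : μ (⋃ σ, E σ) = 1 := by
      have h1 : μ (⋃ σ, E σ) + μ (⋃ σ, E σ)ᶜ = 1 := by
        rw [measure_add_measure_compl (MeasurableSet.iUnion hEmeas)]
        exact measure_univ
      rw [hEcover, add_zero] at h1
      exact h1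
    have h2 : μ (⋃ σ, E σ) = ∑ σ : Equiv.Perm (Fin n), μ (E σ) := by
      rw [measure_iUnion hEdisj hEmeas, tsum_fintype]
    have h3 : μ (E 1) * (Nat.factorial n : ℝ≥0∞) = 1 := by
      rw [mul_comm, ← hU, h2, Finset.sum_congr rfl (fun σ _ => hEeq σ), Finset.sum_const,
        Finset.card_univ, Fintype.card_perm, Fintype.card_fin, nsmul_eq_mul]
    exact ENNReal.eq_inv_of_mul_eq_one_left h3
  -- X is constant on each order event
  have hXconst : ∀ σ : Equiv.Perm (Fin n), ∀ ω ∈ E σ, X ω = mcount s σ.symm := by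
    intro σ ω hω
    have hlt : ∀ a b : Fin n, w a ω < w b ω ↔ σ.symm a < σ.symm b := by
      intro a b
      have hsm : StrictMono (fun a => w (σ a) ω) := hω
      constructor
      · intro h
        by_contra hc
        rcases lt_or_eq_of_le (not_lt.mp hc) with h' | h'
        · have := hsm h'
          simp only [Equiv.apply_symm_apply] at this
          exact absurd h (not_lt.mpr this.le)
        · have : b = a := by
            have := congrArg σ h'
            simpa using this
          subst this; exact lt_irrefl _ h
      · intro h
        have := hsm h
        simpa using this
    have hcard : ∀ i : Fin n,
        (Finset.univ.filter (fun j => j < i ∧ w j ω < w i ω)).card = lcode σ.symm i := by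
      intro i
      unfold lcode
      congr 1
      apply Finset.filter_congr
      intro j _
      rw [hlt j i]
    rw [hX ω, mcount]
    congr 1
    apply Finset.filter_congr
    intro i _
    rw [hcard i]
  -- the Laplace-type functional
  set g : Ω → ℝ≥0∞ := fun ω => ENNReal.ofReal (((1:ℝ)/2) ^ (X ω)) with hgdef
  have hgmeas : Measurable g :=
    Measurable.ennreal_ofReal ((measurable_from_top (f := fun k : ℕ => ((1:ℝ)/2)^k)).comp hmeasX)
  -- value of the Laplace functional
  have hconst : ∀ σ : Equiv.Perm (Fin n), ∫⁻ ω in E σ, g ω ∂μ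
      = ENNReal.ofReal (((1:ℝ)/2) ^ (mcount s σ.symm)) * μ (E σ) := by
    intro σ
    have hcg := setLIntegral_congr_fun (μ := μ) (hEmeas σ) (f := g)
      (g := fun _ => ENNReal.ofReal (((1:ℝ)/2) ^ (mcount s σ.symm)))
      (fun ω hω => by
        show ENNReal.ofReal (((1:ℝ)/2) ^ (X ω)) = _
        rw [hXconst σ ω hω])
    rw [hcg, setLIntegral_const]
  have hsum : ∫⁻ ω, g ω ∂μ = ∑ σ : Equiv.Perm (Fin n),
      ENNReal.ofReal (((1:ℝ)/2) ^ (mcount s σ.symm)) * μ (E σ) := by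
    have hU : (⋃ σ, E σ) =ᵐ[μ] (Set.univ : Set Ω) := MeasureTheory.ae_eq_univ.mpr hEcover
    calc ∫⁻ ω, g ω ∂μ = ∫⁻ ω in Set.univ, g ω ∂μ := by rw [Measure.restrict_univ]
      _ = ∫⁻ ω in ⋃ σ, E σ, g ω ∂μ := by rw [Measure.restrict_congr_set hU]
      _ = ∑' σ, ∫⁻ ω in E σ, g ω ∂μ := lintegral_iUnion hEmeas hEdisj _
      _ = _ := by rw [tsum_fintype]; exact Finset.sum_congr rfl (fun σ _ => hconst σ)
  set A : ℝ := ∏ i ∈ Finset.range n, (if s ≤ i then ((i:ℝ) + 1 - s/2) else ((i:ℝ) + 1))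
    with hAdef
  have hAnonneg : 0 ≤ A := by
    apply Finset.prod_nonneg
    intro i _
    by_cases hsi : s ≤ i
    · have : (s:ℝ) ≤ i := Nat.cast_le.mpr hsi
      simp only [hsi, if_pos]
      linarith
    · simp only [hsi, if_neg, not_false_iff]
      positivity
  have hints : ∫⁻ ω, g ω ∂μ = ENNReal.ofReal (A / Nat.factorial n) := by
    rw [hsum]
    have h1 : ∀ σ : Equiv.Perm (Fin n), μ (E σ) = ((Nat.factorial n : ℝ≥0∞))⁻¹ :=
      fun σ => (hEeq σ).trans hE1
    rw [Finset.sum_congr rfl (fun σ _ => by rw [h1 σ]), ← Finset.sum_mul]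
    have h2 : ∑ σ : Equiv.Perm (Fin n), ENNReal.ofReal (((1:ℝ)/2) ^ (mcount s σ.symm))
        = ENNReal.ofReal A := by
      rw [Fintype.sum_equiv (Equiv.inv (Equiv.Perm (Fin n)))
        (fun σ => ENNReal.ofReal (((1:ℝ)/2) ^ (mcount s σ.symm)))
        (fun π => ENNReal.ofReal (((1:ℝ)/2) ^ (mcount s π))) (fun σ => rfl),
        ← ENNReal.ofReal_sum_of_nonneg (fun π _ => by positivity), hAdef, ← sum_pow_half]
    rw [h2]
    have h3 : ((Nat.factorial n : ℝ≥0∞))⁻¹ = ENNReal.ofReal ((Nat.factorial n : ℝ))⁻¹ := by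
      rw [← ENNReal.ofReal_natCast (Nat.factorial n),
        ← ENNReal.ofReal_inv_of_pos (by positivity)]
    rw [h3, ← ENNReal.ofReal_mul hAnonneg, div_eq_mul_inv]
  -- rewrite the product
  have hfacpos : (0:ℝ) < Nat.factorial n := by positivity
  set Q : ℝ := ∏ i ∈ Finset.Ico s n, (1 - (s:ℝ)/(2*(i+1))) with hQdef
  have hQeq : A / (Nat.factorial n : ℝ) = Q := by
    have hfac : (Nat.factorial n : ℝ) = ∏ i ∈ Finset.range n, ((i:ℝ)+1) := by
      rw [← Finset.prod_range_add_one_eq_factorial]; push_cast; ring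
    rw [hAdef, hQdef, hfac, ← Finset.prod_div_distrib, Finset.range_eq_Ico,
      ← Finset.prod_Ico_consecutive _ (Nat.zero_le s) (le_of_lt hsn)]
    have h1 : ∏ i ∈ Finset.Ico 0 s,
        (if s ≤ i then ((i:ℝ)+1 - s/2) else ((i:ℝ)+1)) / ((i:ℝ)+1) = 1 := by
      apply Finset.prod_eq_one
      intro i hi
      have : ¬ s ≤ i := by simp only [Finset.mem_Ico] at hi; omega
      rw [if_neg this, div_self (by positivity)]
    rw [h1, one_mul]
    apply Finset.prod_congr rfl
    intro i hi
    have hsi : s ≤ i := (Finset.mem_Ico.mp hi).1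
    rw [if_pos hsi]
    have hip : (0:ℝ) < (i:ℝ) + 1 := by positivity
    field_simp
  -- Chernoff bound
  set r : ℝ := ((1:ℝ)/2) ^ (H/2 : ℝ) with hrdef
  have hrpos : 0 < r := Real.rpow_pos_of_pos (by norm_num) _
  have hsubset : {ω | (X ω : ℝ) < H / 2} ⊆ {ω | ENNReal.ofReal r ≤ g ω} := by
    intro ω hω
    simp only [Set.mem_setOf_eq] at hω ⊢
    rw [hgdef]
    simp only
    apply ENNReal.ofReal_le_ofReal
    have hcast : ((1:ℝ)/2) ^ (X ω) = ((1:ℝ)/2) ^ ((X ω : ℕ) : ℝ) := (Real.rpow_natCast _ _).symm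
    rw [hcast, hrdef]
    exact Real.rpow_le_rpow_of_exponent_ge (by norm_num) (by norm_num) hω.le
  have hQle : Q ≤ Real.exp (-(H/2)) := by
    have hterm : ∀ i ∈ Finset.Ico s n,
        (1 - (s:ℝ)/(2*((i:ℝ)+1))) ≤ Real.exp (-((s:ℝ)/(2*((i:ℝ)+1)))) := by
      intro i _
      have := Real.add_one_le_exp (-((s:ℝ)/(2*((i:ℝ)+1))))
      linarith
    have hnn : ∀ i ∈ Finset.Ico s n, (0:ℝ) ≤ 1 - (s:ℝ)/(2*((i:ℝ)+1)) := by
      intro i hi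
      have hsi : (s:ℝ) ≤ (i:ℝ) + 1 := by
        have := (Finset.mem_Ico.mp hi).1
        have : (s:ℝ) ≤ (i:ℝ) := Nat.cast_le.mpr this
        linarith
      have hip : (0:ℝ) < (i:ℝ) + 1 := by positivity
      have : (s:ℝ)/(2*((i:ℝ)+1)) ≤ 1/2 := by
        rw [div_le_div_iff₀ (by positivity) (by norm_num)]
        linarith
      linarith
    calc Q ≤ ∏ i ∈ Finset.Ico s n, Real.exp (-((s:ℝ)/(2*((i:ℝ)+1)))) :=
          Finset.prod_le_prod hnn hterm
      _ = Real.exp (∑ i ∈ Finset.Ico s n, -((s:ℝ)/(2*((i:ℝ)+1)))) := (Real.exp_sum _ _).symm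
      _ = Real.exp (-(H/2)) := by
          congr 1
          rw [hHsum]
          have hrhs : -((∑ i ∈ Finset.Ico s n, (s:ℝ)/(i+1))/2)
              = ∑ i ∈ Finset.Ico s n, -((s:ℝ)/(i+1)/2) := by
            rw [Finset.sum_div, ← Finset.sum_neg_distrib]
          rw [hrhs]
          apply Finset.sum_congr rfl
          intro i _
          rw [div_div]
          ring_nf
  have hr : r = Real.exp (-(H/2) * Real.log 2) := by
    rw [hrdef, Real.rpow_def_of_pos (by norm_num)]
    congr 1
    rw [show ((1:ℝ)/2) = 2⁻¹ by norm_num, Real.log_inv]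
    ring
  have hfinal : Q / r ≤ Real.exp (-H / 8) := by
    rw [div_le_iff₀ hrpos, hr]
    calc Q ≤ Real.exp (-(H/2)) := hQle
      _ ≤ Real.exp (-H / 8) * Real.exp (-(H/2) * Real.log 2) := by
          rw [← Real.exp_add]
          apply Real.exp_le_exp.mpr
          have hlog : Real.log 2 ≤ 3/4 := by linarith [Real.log_two_lt_d9]
          nlinarith [mul_nonneg hHnonneg (by linarith : (0:ℝ) ≤ 3/8 - Real.log 2 / 2)]
  calc μ {ω | (X ω : ℝ) < H / 2} ≤ μ {ω | ENNReal.ofReal r ≤ g ω} := measure_mono hsubset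
    _ ≤ (∫⁻ ω, g ω ∂μ) / ENNReal.ofReal r :=
        meas_ge_le_lintegral_div hgmeas.aemeasurable
          (ENNReal.ofReal_pos.mpr hrpos).ne' ENNReal.ofReal_ne_top
    _ = ENNReal.ofReal (Q / r) := by
        rw [hints, hQeq, ENNReal.ofReal_div_of_pos hrpos]
    _ ≤ ENNReal.ofReal (Real.exp (-H / 8)) := ENNReal.ofReal_le_ofReal hfinal
end
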